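/- arXiv:1109.1072 — 9 statements merged into one kernel-verified Lean document; each statement's English description precedes it below -/
import Mathlib

section
/- Let J be an integer interval whose right endpoint is a dyadic point k·2^n of level n ≥ 1 (for some k ≥ 1), and whose length satisfies |J| < 2^n. Then J can be decomposed as a union of pairwise disjoint dyadic intervals whose levels are strictly increasing with respect to their position in J (from left to right). -/
lemma aux : ∀ d : ℕ, 0 < d → ∀ N a : ℕ, d < 2 ^ N → 2 ^ N ∣ a + d →
    ∃ (m : ℕ) (p : ℕ → ℕ) (l : ℕ → ℕ),
      1 ≤ m ∧ p 0 = a ∧ p m = a + d ∧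
      (∀ i < m, 2 ^ (l i) ∣ p i ∧ p (i + 1) = p i + 2 ^ (l i)) ∧
      (∀ i j, i < j → j < m → l i < l j) ∧ l 0 = padicValNat 2 d := by
  intro d
  induction d using Nat.strong_induction_on with
  | _ d ih =>
  intro hd N a hdN hdvd
  haveI : Fact (Nat.Prime 2) := ⟨Nat.prime_two⟩
  set v := padicValNat 2 d with hv
  have hvd : 2 ^ v ∣ d := pow_padicValNat_dvd
  have hvlt : 2 ^ v ≤ d := Nat.le_of_dvd hd hvd
  have hvN : v < N := by
    by_contra h
    push_neg at h
    exact absurd (lt_of_le_of_lt hvlt hdN)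
      (not_lt.2 (Nat.pow_le_pow_right (by norm_num) h))
  have hva : 2 ^ v ∣ a := by
    have h1 : 2 ^ v ∣ a + d := dvd_trans (pow_dvd_pow 2 hvN.le) hdvd
    have := Nat.dvd_sub h1 hvd
    simpa using this
  rcases eq_or_lt_of_le hvlt with heq | hlt
  · -- d = 2^v : single piece
    refine ⟨1, fun i => if i = 0 then a else a + d, fun _ => v, le_refl 1, by simp,
      by simp, ?_, ?_, rfl⟩
    · intro i hi
      interval_cases i
      refine ⟨by simpa using hva, by simp [heq]⟩
    · intro i j hij hj; omega
  · -- d > 2^v : peel off piece of length 2^v and recurse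
    set d' := d - 2 ^ v with hd'
    have hd'pos : 0 < d' := by omega
    have hd'lt : d' < d := by omega
    have hsuccdvd : 2 ^ (v + 1) ∣ d' := by
      have hnot : ¬ 2 ^ (v + 1) ∣ d := pow_succ_padicValNat_not_dvd hd.ne'
      obtain ⟨c, hc⟩ := hvd
      have hc1 : 1 ≤ c := by
        rcases Nat.eq_zero_or_pos c with h | h
        · subst h; omega
        · exact h
      obtain ⟨e, he⟩ : ∃ e, c = e + 1 := ⟨c - 1, by omega⟩
      have heven : 2 ∣ e := by
        rcases Nat.even_or_odd e with h | h
        · exact h.two_dvd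
        · exfalso
          obtain ⟨q, hq⟩ := h
          exact hnot ⟨q + 1, by rw [hc, he, hq]; ring⟩
      obtain ⟨q, hq⟩ := heven
      refine ⟨q, ?_⟩
      have : d = 2 ^ v * e + 2 ^ v := by rw [hc, he]; ring
      rw [hd', this, hq]
      ring_nf
      omega
    have hval' : v + 1 ≤ padicValNat 2 d' :=
      (padicValNat_dvd_iff_le hd'pos.ne').mp hsuccdvd
    obtain ⟨m', p', l', hm', hp0, hpm, hpieces, hmono, hl0⟩ :=
      ih d' hd'lt hd'pos N (a + 2 ^ v) (by omega)
        (by rwa [show a + 2 ^ v + d' = a + d by omega])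
    refine ⟨m' + 1, fun i => if i = 0 then a else p' (i - 1),
      fun i => if i = 0 then v else l' (i - 1), by omega, by simp, ?_, ?_, ?_, by simp⟩
    · simp only [if_neg (Nat.succ_ne_zero m')]
      rw [show m' + 1 - 1 = m' from rfl, hpm]; omega
    · intro i hi
      rcases Nat.eq_zero_or_pos i with rfl | hipos
      · simpa using ⟨hva, hp0⟩
      · have h1 : ¬ (i = 0) := by omega
        have h2 : ¬ (i + 1 = 0) := by omega
        simp only [if_neg h1, if_neg h2]
        have := hpieces (i - 1) (by omega)
        rwa [show i + 1 - 1 = i - 1 + 1 by omega]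
    · intro i j hij hj
      have hj0 : ¬ (j = 0) := by omega
      rcases Nat.eq_zero_or_pos i with rfl | hipos
      · simp only [if_neg hj0, reduceIte]
        have : l' 0 ≤ l' (j - 1) := by
          rcases Nat.eq_zero_or_pos (j - 1) with h | h
          · rw [h]
          · exact (hmono 0 (j - 1) h (by omega)).le
        omega
      · have hi0 : ¬ (i = 0) := by omega
        simp only [if_neg hi0, if_neg hj0]
        exact hmono (i - 1) (j - 1) (by omega) (by omega)

/-- An integer interval `[a, k·2^n]` whose right endpoint is a dyadic point
of level `n ≥ 1` and whose length is `< 2^n` decomposes into pairwise disjoint dyadic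
intervals whose levels strictly increase from left to right.
A dyadic interval of level `l` is `[q·2^l, (q+1)·2^l]`; we encode the decomposition by
successive endpoints `p 0 = a < p 1 < ⋯ < p m = k·2^n`, where the `i`-th piece
`[p i, p (i+1)]` is dyadic of level `l i` (i.e. `2^(l i) ∣ p i` and
`p (i+1) = p i + 2^(l i)`), with strictly increasing levels. -/
theorem stmt0 (n k a : ℕ) (hn : 1 ≤ n) (hk : 1 ≤ k)
    (ha : a < k * 2 ^ n) (hlen : k * 2 ^ n - a < 2 ^ n) :
    ∃ (m : ℕ) (p : ℕ → ℕ) (l : ℕ → ℕ),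
      1 ≤ m ∧ p 0 = a ∧ p m = k * 2 ^ n ∧
      (∀ i < m, 2 ^ (l i) ∣ p i ∧ p (i + 1) = p i + 2 ^ (l i)) ∧
      (∀ i j, i < j → j < m → l i < l j) := by
  set d := k * 2 ^ n - a with hd
  have hdpos : 0 < d := by omega
  have hdvd : 2 ^ n ∣ a + d := by
    rw [show a + d = k * 2 ^ n by omega]
    exact dvd_mul_left _ _
  obtain ⟨m, p, l, hm, hp0, hpm, hpieces, hmono, _⟩ := aux d hdpos n a hlen hdvd
  exact ⟨m, p, l, hm, hp0, by rw [hpm]; omega, hpieces, hmono⟩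
end

section
/- Let J be an integer interval and let n(J) denote the maximal level of any dyadic interval contained in J. Then J contains at most two dyadic intervals of level n(J), and if it contains two, they are adjacent. -/
/-- A dyadic interval of level `j`, namely `[k·2^j, (k+1)·2^j]`, is contained in the
integer interval `[a, b]`. -/
def DyadicIn (a b j k : ℕ) : Prop := a ≤ k * 2 ^ j ∧ (k + 1) * 2 ^ j ≤ b

/-- If `N = n(J)` is the maximal level of a dyadic interval contained in the
integer interval `J = [a, b]`, then `J` contains at most two dyadic intervals of level
`N`, and if it contains two distinct ones, they are adjacent (consecutive). -/
theorem stmt2 (a b N : ℕ) (hab : a < b)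
    (hN : ∃ k, DyadicIn a b N k)
    (hmax : ∀ j k, DyadicIn a b j k → j ≤ N) :
    (∀ k₁ k₂ k₃, DyadicIn a b N k₁ → DyadicIn a b N k₂ → DyadicIn a b N k₃ →
      k₁ = k₂ ∨ k₁ = k₃ ∨ k₂ = k₃) ∧
    (∀ k₁ k₂, DyadicIn a b N k₁ → DyadicIn a b N k₂ → k₁ < k₂ → k₂ = k₁ + 1) := by
  have key : ∀ k₁ k₂, DyadicIn a b N k₁ → DyadicIn a b N k₂ → k₁ < k₂ → k₂ = k₁ + 1 := by
    intro k₁ k₂ h₁ h₂ hlt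
    by_contra hne
    have hk2 : k₁ + 2 ≤ k₂ := by omega
    -- choose the even element of {k₁, k₁+1}
    obtain ⟨m, hm⟩ : ∃ m, (k₁ = 2 * m ∨ k₁ + 1 = 2 * m) := ⟨(k₁ + 1) / 2, by omega⟩
    have hk₁m : k₁ ≤ 2 * m := by omega
    have hm2 : 2 * m + 2 ≤ k₂ + 1 := by omega
    have hd : DyadicIn a b (N + 1) m := by
      constructor
      · calc a ≤ k₁ * 2 ^ N := h₁.1
          _ ≤ (2 * m) * 2 ^ N := Nat.mul_le_mul_right _ hk₁m
          _ = m * 2 ^ (N + 1) := by ring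
      · calc (m + 1) * 2 ^ (N + 1) = (2 * m + 2) * 2 ^ N := by ring
          _ ≤ (k₂ + 1) * 2 ^ N := Nat.mul_le_mul_right _ hm2
          _ ≤ b := h₂.2
    have := hmax (N + 1) m hd
    omega
  refine ⟨?_, key⟩
  intro k₁ k₂ k₃ h₁ h₂ h₃
  by_contra h
  push_neg at h
  obtain ⟨h12, h13, h23⟩ := h
  rcases Nat.lt_or_ge k₁ k₂ with h | h
  · have := key k₁ k₂ h₁ h₂ h
    rcases Nat.lt_or_ge k₁ k₃ with h' | h'
    · have := key k₁ k₃ h₁ h₃ h'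
      omega
    · have := key k₃ k₁ h₃ h₁ (by omega)
      have := key k₃ k₂ h₃ h₂ (by omega)
      omega
  · have := key k₂ k₁ h₂ h₁ (by omega)
    rcases Nat.lt_or_ge k₂ k₃ with h' | h'
    · have := key k₂ k₃ h₂ h₃ h'
      rcases Nat.lt_or_ge k₁ k₃ with h'' | h''
      · have := key k₁ k₃ h₁ h₃ h''; omega
      · have := key k₃ k₁ h₃ h₁ (by omega); omega
    · have := key k₃ k₂ h₃ h₂ (by omega)
      have := key k₃ k₁ h₃ h₁ (by omega)
      omega
end

section
/- Let γ : [0,∞) → V be a continuous path into a Banach space, and let (t_n)_{n≥0} be a strictly increasing sequence of positive reals with t_n → ∞. Let γ¹ be the path that agrees with γ at each t_n and is linear between consecutive t_n (and constant equal to γ(t_0) on [0, t_0]). Then the squared 2-variation of γ satisfies ‖γ‖²_{2-var,[0,∞)} ≤ 3·(‖γ‖²_{2-var,[0,t_0]} + ‖γ¹‖²_{2-var,[0,∞)} + Σ_{n≥0} ‖γ‖²_{2-var,[t_n,t_{n+1}]}). -/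
/-!
Cut the partition at the grid points `t n`. An increment lying in one cell `[0, t 0]` or
`[t n, t (n + 1)]` is charged to that cell. An increment crossing cells is split at the first and
the last grid point it passes; by `(a + b + c) ^ p ≤ 3 ^ (p - 1) * (a ^ p + b ^ p + c ^ p)` its
`p`-th power is at most `3 ^ (p - 1)` times the sum of those of the two end pieces, each lying in
one cell, and of the middle piece, an increment of `γ` between grid points and hence of `γ¹`.
The pieces charged to one cell come from a monotone sequence in that cell, and the middle pieces
of different increments lie over non-overlapping intervals, so summing gives the bound.
-/

open Filter Set ENNReal

noncomputable section

variable {V : Type*} [NormedAddCommGroup V] [NormedSpace ℝ V]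

/-- The `p`-th power of the `p`-variation of `γ` on `[a, b]`: the supremum, over finite
partitions `a = t 0 ≤ t 1 ≤ ⋯ ≤ t m = b`, of `∑ ‖γ(t (i+1)) − γ(t i)‖^p` (in `ℝ≥0∞`). -/
def pVarPow (p : ℝ) (γ : ℝ → V) (a b : ℝ) : ℝ≥0∞ :=
  ⨆ (m : ℕ) (t : ℕ → ℝ) (_ : t 0 = a ∧ t m = b ∧ ∀ i < m, t i ≤ t (i + 1)),
    ENNReal.ofReal (∑ i ∈ Finset.range m, ‖γ (t (i + 1)) - γ (t i)‖ ^ p)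

/-- The `p`-th power of the `p`-variation of `γ` on `[0, ∞)`, as
`lim_{n→∞} ‖γ‖_{p-var,[0,n]}^p = ⨆ n, ‖γ‖_{p-var,[0,n]}^p`. -/
def pVarPowInf (p : ℝ) (γ : ℝ → V) : ℝ≥0∞ := ⨆ n : ℕ, pVarPow p γ 0 n

end

section

variable {V : Type*} [NormedAddCommGroup V] {p : ℝ} {γ γ₁ : ℝ → V} {τ : ℕ → ℝ}

open Finset

noncomputable def incrPow (p : ℝ) (γ : ℝ → V) (x y : ℝ) : ℝ≥0∞ :=
  ENNReal.ofReal (‖γ y - γ x‖ ^ p)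

theorem pVarPow_eq_iSup_sum_incrPow (a b : ℝ) :
    pVarPow p γ a b = ⨆ (m : ℕ) (t : ℕ → ℝ) (_ : t 0 = a ∧ t m = b ∧ ∀ i < m, t i ≤ t (i + 1)),
      ∑ i ∈ range m, incrPow p γ (t i) (t (i + 1)) := by
  simp only [pVarPow, incrPow]
  congr! with m t _
  exact ofReal_sum_of_nonneg fun i _ => Real.rpow_nonneg (norm_nonneg _) _

theorem sum_incrPow_le_pVarPow {a b : ℝ} {r : ℕ → ℝ} (hr : Monotone r)
    (hab : ∀ i, r i ∈ Icc a b) (m : ℕ) :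
    ∑ i ∈ range m, incrPow p γ (r i) (r (i + 1)) ≤ pVarPow p γ a b := by
  -- `a, r 0, …, r m, b` is a partition of `[a, b]`
  set r' : ℕ → ℝ := fun k => if k = 0 then a else if k ≤ m + 1 then r (k - 1) else b
  have hr'_succ (k : ℕ) (hk : k ≤ m) : r' (k + 1) = r k := by simp [r', hk]
  have hsum : ∑ i ∈ range m, incrPow p γ (r i) (r (i + 1)) ≤
      ∑ k ∈ range (m + 2), incrPow p γ (r' k) (r' (k + 1)) := by
    have hcongr : ∑ k ∈ range m, incrPow p γ (r' (k + 1)) (r' (k + 1 + 1)) =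
        ∑ i ∈ range m, incrPow p γ (r i) (r (i + 1)) :=
      sum_congr rfl fun i hi => by
        rw [hr'_succ i (by simp at hi; omega), hr'_succ (i + 1) (by simp at hi; omega)]
    rw [sum_range_succ, sum_range_succ', hcongr]
    exact le_self_add.trans le_self_add
  refine hsum.trans ?_
  rw [pVarPow_eq_iSup_sum_incrPow]
  refine le_iSup₂_of_le (m + 2) r'
    (le_iSup_of_le ⟨by simp [r'], by simp [r'], fun k hk => ?_⟩ le_rfl)
  rcases k with _ | k
  · simpa [r', hr'_succ 0 (Nat.zero_le m)] using (hab 0).1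
  · rw [hr'_succ k (by omega)]
    rcases (show k < m ∨ k = m by omega) with hk | rfl
    · rw [hr'_succ (k + 1) hk]; exact hr k.le_succ
    · simpa [r'] using (hab k).2

theorem pVarPow_le_of_forall_monotone {a b : ℝ} {c : ℝ≥0∞}
    (h : ∀ (m : ℕ) (r : ℕ → ℝ), Monotone r → (∀ i, r i ∈ Icc a b) →
      ∑ i ∈ range m, incrPow p γ (r i) (r (i + 1)) ≤ c) :
    pVarPow p γ a b ≤ c := by
  rw [pVarPow_eq_iSup_sum_incrPow]
  refine iSup₂_le fun m t => iSup_le fun ⟨ht0, htm, hstep⟩ => ?_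
  have hr : Monotone fun i => t (min i m) := monotone_nat_of_le_succ fun i => by
    rcases lt_or_ge i m with hi | hi
    · simpa [min_eq_left hi.le, min_eq_left (Nat.succ_le_of_lt hi)] using hstep i hi
    · simp [min_eq_right hi, min_eq_right (hi.trans i.le_succ)]
  have hmem (i : ℕ) : t (min i m) ∈ Icc a b := by
    refine ⟨ht0 ▸ hr (Nat.zero_le i), ?_⟩
    simpa [min_eq_right (le_max_right i m), htm] using hr (le_max_left i m)
  calc ∑ i ∈ range m, incrPow p γ (t i) (t (i + 1))
      = ∑ i ∈ range m, incrPow p γ (t (min i m)) (t (min (i + 1) m)) :=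
        sum_congr rfl fun i hi => by
          rw [min_eq_left (Finset.mem_range.1 hi).le, min_eq_left (Finset.mem_range.1 hi)]
    _ ≤ c := h m _ hr hmem

theorem pVarPow_mono {a b c d : ℝ} (hca : c ≤ a) (hbd : b ≤ d) :
    pVarPow p γ a b ≤ pVarPow p γ c d :=
  pVarPow_le_of_forall_monotone fun m _ hr hab =>
    sum_incrPow_le_pVarPow hr (fun i => ⟨hca.trans (hab i).1, (hab i).2.trans hbd⟩) m

theorem pVarPow_le_pVarPowInf {a : ℝ} (ha : 0 ≤ a) (b : ℝ) : pVarPow p γ a b ≤ pVarPowInf p γ :=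
  (pVarPow_mono ha (Nat.le_ceil b)).trans (le_iSup (fun n : ℕ => pVarPow p γ 0 n) ⌈b⌉₊)

theorem sum_incrPow_le_pVarPow_of_interleaved {a b : ℝ} {u v : ℕ → ℝ} (huv : ∀ i, u i ≤ v i)
    (hvu : ∀ i, v i ≤ u (i + 1)) (hu : ∀ i, u i ∈ Icc a b) (hv : ∀ i, v i ∈ Icc a b) (m : ℕ) :
    ∑ i ∈ range m, incrPow p γ (u i) (v i) ≤ pVarPow p γ a b := by
  set w : ℕ → ℝ := fun k => if Even k then u (k / 2) else v (k / 2)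
  have hw_even (i : ℕ) : w (2 * i) = u i := by simp [w]
  have hw_odd (i : ℕ) : w (2 * i + 1) = v i := by
    simp [w, show (2 * i + 1) / 2 = i by omega]
  have hw : Monotone w := monotone_nat_of_le_succ fun k => by
    obtain ⟨i, rfl | rfl⟩ := Nat.even_or_odd' k
    · rw [hw_even, hw_odd]; exact huv i
    · rw [hw_odd, show 2 * i + 1 + 1 = 2 * (i + 1) by ring, hw_even]; exact hvu i
  calc ∑ i ∈ range m, incrPow p γ (u i) (v i)
      = ∑ k ∈ (range m).image (2 * ·), incrPow p γ (w k) (w (k + 1)) := by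
        rw [sum_image fun x _ y _ h => by simpa using h]
        exact sum_congr rfl fun i _ => by rw [hw_even, hw_odd]
    _ ≤ ∑ k ∈ range (2 * m), incrPow p γ (w k) (w (k + 1)) :=
        sum_le_sum_of_subset fun k hk => by
          obtain ⟨i, hi, rfl⟩ := mem_image.1 hk
          simp only [Finset.mem_range] at hi ⊢
          omega
    _ ≤ pVarPow p γ a b := sum_incrPow_le_pVarPow hw (fun k => by
        obtain ⟨i, rfl | rfl⟩ := Nat.even_or_odd' k
        · rw [hw_even]; exact hu i
        · rw [hw_odd]; exact hv i) _

theorem incrPow_le_three_mul (hp : 1 ≤ p) (x y z w : ℝ) :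
    incrPow p γ x w ≤ 3 ^ (p - 1) * (incrPow p γ x y + incrPow p γ y z + incrPow p γ z w) := by
  have hp0 : 0 ≤ p := zero_le_one.trans hp
  set A := ‖γ y - γ x‖
  set B := ‖γ z - γ y‖
  set C := ‖γ w - γ z‖
  have htri : ‖γ w - γ x‖ ≤ A + B + C := by
    calc ‖γ w - γ x‖ ≤ ‖γ w - γ z‖ + ‖γ z - γ x‖ := norm_sub_le_norm_sub_add_norm_sub _ _ _
      _ ≤ C + (B + A) := by gcongr; exact norm_sub_le_norm_sub_add_norm_sub _ _ _
      _ = A + B + C := by ring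
  have hconv : (A + B + C) ^ p ≤ 3 ^ (p - 1) * (A ^ p + B ^ p + C ^ p) := by
    simpa [Fin.sum_univ_three] using
      Real.rpow_sum_le_const_mul_sum_rpow_of_nonneg (s := Finset.univ) (f := ![A, B, C]) hp
        (by simp [Fin.forall_fin_succ, A, B, C])
  have hreal : ‖γ w - γ x‖ ^ p ≤ 3 ^ (p - 1) * (A ^ p + B ^ p + C ^ p) :=
    (Real.rpow_le_rpow (norm_nonneg _) htri hp0).trans hconv
  calc incrPow p γ x w ≤ ENNReal.ofReal (3 ^ (p - 1) * (A ^ p + B ^ p + C ^ p)) :=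
        ENNReal.ofReal_le_ofReal hreal
    _ = _ := by
        rw [ENNReal.ofReal_mul (by positivity), ENNReal.ofReal_add (by positivity) (by positivity),
          ENNReal.ofReal_add (by positivity) (by positivity),
          ← ENNReal.ofReal_rpow_of_nonneg (by norm_num) (by linarith), ENNReal.ofReal_ofNat]
        rfl

theorem exists_cellIndex (τ : ℕ → ℝ) (n : ℕ) :
    ∃ e : ℝ → ℕ, Monotone e ∧
      ∀ x ∈ Icc (τ 0) (τ (n + 1)), e x ≤ n ∧ x ∈ Icc (τ (e x)) (τ (e x + 1)) := by
  classical
  refine ⟨fun x => Nat.findGreatest (fun j => τ j ≤ x) n,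
    fun x y hxy => Nat.findGreatest_mono (fun j hj => hj.trans hxy) le_rfl,
    fun x ⟨h0, hn⟩ => ⟨Nat.findGreatest_le n,
      Nat.findGreatest_spec (P := fun j => τ j ≤ x) (Nat.zero_le n) h0, ?_⟩⟩
  rcases (Nat.findGreatest_le (P := fun j => τ j ≤ x) n).eq_or_lt with heq | hlt
  · simp only [heq]; exact hn
  · exact le_of_not_ge (Nat.findGreatest_is_greatest (Nat.lt_succ_self _) hlt)

-- For `i = j` the last term is the zero increment of `γ₁` at `τ (i + 1)`.
theorem incrPow_le_sum_cells_add_grid (hp : 1 ≤ p) (hτ : Monotone τ)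
    (hγ₁ : ∀ j, γ₁ (τ (j + 1)) = γ (τ (j + 1))) {x y : ℝ} {i j n : ℕ} (hij : i ≤ j)
    (hjn : j ≤ n) (hx : x ∈ Icc (τ i) (τ (i + 1))) (hy : y ∈ Icc (τ j) (τ (j + 1))) :
    incrPow p γ x y ≤ 3 ^ (p - 1) *
      (∑ k ∈ range (n + 1), incrPow p γ (projIcc (τ k) (τ (k + 1)) (hτ k.le_succ) x)
          (projIcc (τ k) (τ (k + 1)) (hτ k.le_succ) y) +
        incrPow p γ₁ (τ (i + 1)) (τ (max j (i + 1)))) := by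
  rcases hij.eq_or_lt with rfl | hlt
  · have hsingle := single_le_sum
      (f := fun k => incrPow p γ (projIcc (τ k) (τ (k + 1)) (hτ k.le_succ) x)
        (projIcc (τ k) (τ (k + 1)) (hτ k.le_succ) y))
      (fun _ _ => zero_le) (Finset.mem_range.2 (Nat.lt_succ_of_le hjn))
    simp only [projIcc_of_mem _ hx, projIcc_of_mem _ hy] at hsingle
    have h3 : (1 : ℝ≥0∞) ≤ 3 ^ (p - 1) := by
      simpa using ENNReal.rpow_le_rpow (show (1 : ℝ≥0∞) ≤ 3 by norm_num) (sub_nonneg.2 hp)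
    exact (hsingle.trans le_self_add).trans (le_mul_of_one_le_left' h3)
  · have hyi : (projIcc (τ i) (τ (i + 1)) (hτ i.le_succ) y : ℝ) = τ (i + 1) := by
      rw [projIcc_of_right_le _ ((hτ hlt).trans hy.1)]
    have hxj : (projIcc (τ j) (τ (j + 1)) (hτ j.le_succ) x : ℝ) = τ j := by
      rw [projIcc_of_le_left _ (hx.2.trans (hτ hlt))]
    have hgrid :
        incrPow p γ (τ (i + 1)) (τ j) = incrPow p γ₁ (τ (i + 1)) (τ (max j (i + 1))) := by
      obtain ⟨j, rfl⟩ : ∃ j', j = j' + 1 := ⟨j - 1, by omega⟩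
      rw [max_eq_left hlt, incrPow, incrPow, hγ₁, hγ₁]
    have hpair : incrPow p γ x (τ (i + 1)) + incrPow p γ (τ j) y ≤
        ∑ k ∈ range (n + 1), incrPow p γ (projIcc (τ k) (τ (k + 1)) (hτ k.le_succ) x)
          (projIcc (τ k) (τ (k + 1)) (hτ k.le_succ) y) := by
      refine le_of_eq_of_le ?_ (sum_le_sum_of_subset (s := {i, j}) fun k => ?_)
      · rw [sum_pair hlt.ne, hyi, hxj, projIcc_of_mem _ hx, projIcc_of_mem _ hy]
      · simp only [Finset.mem_insert, Finset.mem_singleton, Finset.mem_range]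
        omega
    calc incrPow p γ x y ≤ 3 ^ (p - 1) * (incrPow p γ x (τ (i + 1)) +
          incrPow p γ (τ (i + 1)) (τ j) + incrPow p γ (τ j) y) := incrPow_le_three_mul hp _ _ _ _
      _ ≤ _ := by
          rw [add_right_comm, hgrid]
          gcongr

theorem pVarPow_le_sum_cells_add_grid (hp : 1 ≤ p) (hτ : Monotone τ)
    (hγ₁ : ∀ j, γ₁ (τ (j + 1)) = γ (τ (j + 1))) (n : ℕ) :
    pVarPow p γ (τ 0) (τ (n + 1)) ≤ 3 ^ (p - 1) *
      (∑ k ∈ range (n + 1), pVarPow p γ (τ k) (τ (k + 1)) + pVarPow p γ₁ (τ 1) (τ (n + 1))) := by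
  refine pVarPow_le_of_forall_monotone fun m s hs hmem => ?_
  obtain ⟨e, he, hcell⟩ := exists_cellIndex τ n
  have hcells (k : ℕ) : ∑ i ∈ range m,
      incrPow p γ (projIcc (τ k) (τ (k + 1)) (hτ k.le_succ) (s i))
        (projIcc (τ k) (τ (k + 1)) (hτ k.le_succ) (s (i + 1))) ≤ pVarPow p γ (τ k) (τ (k + 1)) :=
    sum_incrPow_le_pVarPow (fun _ _ hab => monotone_projIcc (h := hτ k.le_succ) (hs hab))
      (fun _ => Subtype.prop _) m
  have hgrid : ∑ i ∈ range m, incrPow p γ₁ (τ (e (s i) + 1))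
      (τ (max (e (s (i + 1))) (e (s i) + 1))) ≤ pVarPow p γ₁ (τ 1) (τ (n + 1)) := by
    have hbound (i : ℕ) : e (s i) ≤ n := (hcell _ (hmem i)).1
    refine sum_incrPow_le_pVarPow_of_interleaved (u := fun i => τ (e (s i) + 1))
      (v := fun i => τ (max (e (s (i + 1))) (e (s i) + 1))) (fun i => hτ (le_max_right _ _))
      (fun i => hτ (max_le (Nat.le_succ _) (Nat.succ_le_succ (he (hs i.le_succ)))))
      (fun i => ⟨hτ (by omega), hτ (Nat.succ_le_succ (hbound i))⟩)
      (fun i => ⟨hτ (by omega),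
        hτ (max_le ((hbound (i + 1)).trans n.le_succ) (Nat.succ_le_succ (hbound i)))⟩) m
  calc ∑ i ∈ range m, incrPow p γ (s i) (s (i + 1))
      ≤ ∑ i ∈ range m, 3 ^ (p - 1) * (∑ k ∈ range (n + 1),
          incrPow p γ (projIcc (τ k) (τ (k + 1)) (hτ k.le_succ) (s i))
            (projIcc (τ k) (τ (k + 1)) (hτ k.le_succ) (s (i + 1))) +
          incrPow p γ₁ (τ (e (s i) + 1)) (τ (max (e (s (i + 1))) (e (s i) + 1)))) :=
        sum_le_sum fun i _ => incrPow_le_sum_cells_add_grid hp hτ hγ₁ (he (hs i.le_succ))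
          (hcell _ (hmem (i + 1))).1 (hcell _ (hmem i)).2 (hcell _ (hmem (i + 1))).2
    _ = 3 ^ (p - 1) * (∑ k ∈ range (n + 1), ∑ i ∈ range m,
          incrPow p γ (projIcc (τ k) (τ (k + 1)) (hτ k.le_succ) (s i))
            (projIcc (τ k) (τ (k + 1)) (hτ k.le_succ) (s (i + 1))) +
          ∑ i ∈ range m, incrPow p γ₁ (τ (e (s i) + 1))
            (τ (max (e (s (i + 1))) (e (s i) + 1)))) := by
        rw [← mul_sum, sum_add_distrib, sum_comm]
    _ ≤ _ := by
        gcongr with k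
        exact hcells k

end

section

variable {V : Type*} [NormedAddCommGroup V] [NormedSpace ℝ V]

open Finset

theorem stmt3_general (γ γ₁ : ℝ → V)
    (t : ℕ → ℝ) (ht0 : 0 < t 0) (hmono : StrictMono t)
    (htend : Tendsto t atTop atTop)
    (hγ₁b : ∀ n : ℕ, ∀ s ∈ Icc (t n) (t (n + 1)),
      γ₁ s = γ (t n) + ((s - t n) / (t (n + 1) - t n)) • (γ (t (n + 1)) - γ (t n))) :
    pVarPowInf 2 γ ≤
      3 * (pVarPow 2 γ 0 (t 0) + pVarPowInf 2 γ₁ +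
        ∑' n : ℕ, pVarPow 2 γ (t n) (t (n + 1))) := by
  let τ : ℕ → ℝ := fun | 0 => 0 | j + 1 => t j
  have hτ : Monotone τ := monotone_nat_of_le_succ fun
    | 0 => ht0.le
    | j + 1 => hmono.monotone j.le_succ
  have hgrid (j : ℕ) : γ₁ (τ (j + 1)) = γ (τ (j + 1)) := by
    simpa [τ] using hγ₁b j (t j) ⟨le_rfl, (hmono j.lt_succ_self).le⟩
  refine iSup_le fun N => ?_
  obtain ⟨n, hn⟩ := (htend.eventually_ge_atTop (N : ℝ)).exists
  have hcells : ∑ k ∈ range (n + 1), pVarPow 2 γ (τ k) (τ (k + 1)) ≤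
      pVarPow 2 γ 0 (t 0) + ∑' k, pVarPow 2 γ (t k) (t (k + 1)) := by
    rw [sum_range_succ', add_comm]
    gcongr
    exact ENNReal.sum_le_tsum _
  calc pVarPow 2 γ 0 N ≤ pVarPow 2 γ (τ 0) (τ (n + 1)) := pVarPow_mono le_rfl hn
    _ ≤ 3 ^ ((2 : ℝ) - 1) * (∑ k ∈ range (n + 1), pVarPow 2 γ (τ k) (τ (k + 1)) +
          pVarPow 2 γ₁ (τ 1) (τ (n + 1))) :=
        pVarPow_le_sum_cells_add_grid one_le_two hτ hgrid n
    _ ≤ _ := by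
        rw [show (2 : ℝ) - 1 = 1 by norm_num, ENNReal.rpow_one, add_right_comm]
        gcongr
        exact pVarPow_le_pVarPowInf ht0.le _

/-- If `γ¹` agrees with the continuous path `γ` at a strictly increasing
sequence of positive times `t n → ∞`, is linear between consecutive `t n` and constant
`γ(t 0)` on `[0, t 0]`, then
`‖γ‖²_{2-var,[0,∞)} ≤ 3(‖γ‖²_{2-var,[0,t 0]} + ‖γ¹‖²_{2-var,[0,∞)} + ∑ₙ ‖γ‖²_{2-var,[tₙ,tₙ₊₁]})`. -/
theorem stmt3 (γ γ₁ : ℝ → V) (hγ : Continuous γ)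
    (t : ℕ → ℝ) (ht0 : 0 < t 0) (hmono : StrictMono t)
    (htend : Tendsto t atTop atTop)
    (hγ₁a : ∀ s ∈ Icc (0 : ℝ) (t 0), γ₁ s = γ (t 0))
    (hγ₁b : ∀ n : ℕ, ∀ s ∈ Icc (t n) (t (n + 1)),
      γ₁ s = γ (t n) + ((s - t n) / (t (n + 1) - t n)) • (γ (t (n + 1)) - γ (t n))) :
    pVarPowInf 2 γ ≤
      3 * (pVarPow 2 γ 0 (t 0) + pVarPowInf 2 γ₁ +
        ∑' n : ℕ, pVarPow 2 γ (t n) (t (n + 1))) :=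
  stmt3_general γ γ₁ t ht0 hmono htend hγ₁b

end
end

section
/- Let γ, γ² : [0,∞) → V be continuous paths of locally bounded variation, c ∈ V, and (t_n)_{n≥0} strictly increasing positive reals with t_n → ∞ such that γ²(t_n) = c for all n. Set γ¹ := γ − γ², A := A(γ), A¹¹ := A(γ¹). Then ‖A‖_{1-var,[0,∞)} ≤ ‖A‖_{1-var,[0,t_0]} + 2‖γ‖²_{2-var,[0,∞)} + 2·Σ_{n≥0} ‖A‖_{1-var,[t_n,t_{n+1}]} + 2·sup_{(n_k)} Σ_k ‖A¹¹(t_{n_k}, t_{n_{k+1}})‖, where the supremum is over strictly increasing subsequences (n_k). -/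
open Filter Set ENNReal

noncomputable section

variable {V : Type*} [NormedAddCommGroup V] [NormedSpace ℝ V]
variable {W : Type*} [NormedAddCommGroup W] [NormedSpace ℝ W]

/-- The `1`-variation of a two-parameter function `α` (with `α(t,t) = 0`) on `[a,b]`:
the supremum over finite partitions of `∑ ‖α(t i, t (i+1))‖`. -/
def oneVarTP (α : ℝ → ℝ → W) (a b : ℝ) : ℝ≥0∞ :=
  ⨆ (m : ℕ) (t : ℕ → ℝ) (_ : t 0 = a ∧ t m = b ∧ ∀ i < m, t i ≤ t (i + 1)),
    ENNReal.ofReal (∑ i ∈ Finset.range m, ‖α (t i) (t (i + 1))‖)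

/-- The `1`-variation of a two-parameter function on `[0, ∞)`. -/
def oneVarTPInf (α : ℝ → ℝ → W) : ℝ≥0∞ := ⨆ n : ℕ, oneVarTP α 0 n

/-!
Fix a partition of `[0, n]`. Each summand `‖A(s, r)‖` is bounded by a budget `G(s, r)`
(`areaBudget`) that is superadditive in the interval, so the partition sum is at most `G(0, n)`.

The grid `0, t 0, t 1, …` cuts `[0, ∞)` into cells. If `[s, r]` lies in one cell, `‖A(s, r)‖` is
charged to the 1-variation of `A` on that cell. Otherwise let `t a ≤ t b` be the first and last
grid points in `[s, r]`. Chen's identity at `t a` and `t b` splits `A(s, r)` into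
`A(s, t a) + A(t a, t b) + A(t b, r)` plus two brackets, each at most a product of increments of
`γ` and hence bounded by the 2-variation of `γ`. Since `γ` and `γ¹` have the same increments
between grid points, `A - A¹¹` is additive along the grid:
`A(t a, t b) = A¹¹(t a, t b) + ∑_{a ≤ j < b} (A - A¹¹)(t j, t (j + 1))`. The pieces of `A` are
charged to the cells, while `A¹¹(t a, t b)` and the `A¹¹(t j, t (j + 1))` are charged to two
separate chains of grid indices, whence the factor 2 in front of the supremum over subsequences.
-/

section Chains

variable {α : Type*}

def appendSeq (σ₁ : ℕ → α) (m : ℕ) (σ₂ : ℕ → α) : ℕ → α :=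
  fun i => if i ≤ m then σ₁ i else σ₂ (i - (m + 1))

theorem appendSeq_of_le {σ₁ σ₂ : ℕ → α} {m i : ℕ} (hi : i ≤ m) :
    appendSeq σ₁ m σ₂ i = σ₁ i := if_pos hi

theorem appendSeq_add {σ₁ σ₂ : ℕ → α} (m j : ℕ) :
    appendSeq σ₁ m σ₂ (m + 1 + j) = σ₂ j := by
  rw [appendSeq, if_neg (by omega), Nat.add_sub_cancel_left]

theorem appendSeq_succ {σ₁ σ₂ : ℕ → α} (m : ℕ) : appendSeq σ₁ m σ₂ (m + 1) = σ₂ 0 :=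
  appendSeq_add m 0

def chainSum (g : α → α → ℝ) (m : ℕ) (σ : ℕ → α) : ℝ :=
  ∑ i ∈ Finset.range m, g (σ i) (σ (i + 1))

theorem chainSum_succ (g : α → α → ℝ) (m : ℕ) (σ : ℕ → α) :
    chainSum g (m + 1) σ = chainSum g m σ + g (σ m) (σ (m + 1)) :=
  Finset.sum_range_succ _ _

theorem chainSum_nonneg {g : α → α → ℝ} (hg : ∀ x y, 0 ≤ g x y) (m : ℕ) (σ : ℕ → α) :
    0 ≤ chainSum g m σ :=
  Finset.sum_nonneg fun _ _ => hg _ _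

theorem chainSum_appendSeq (g : α → α → ℝ) (σ₁ σ₂ : ℕ → α) (m m' : ℕ) :
    chainSum g (m + 1 + m') (appendSeq σ₁ m σ₂) =
      chainSum g m σ₁ + g (σ₁ m) (σ₂ 0) + chainSum g m' σ₂ := by
  unfold chainSum
  rw [Finset.sum_range_add (fun i => g (appendSeq σ₁ m σ₂ i) (appendSeq σ₁ m σ₂ (i + 1))),
    Finset.sum_range_succ, appendSeq_of_le le_rfl, appendSeq_succ]
  congr 1
  · congr 1
    refine Finset.sum_congr rfl fun i hi => ?_
    have hi : i < m := Finset.mem_range.mp hi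
    rw [appendSeq_of_le hi.le, appendSeq_of_le hi]
  · refine Finset.sum_congr rfl fun i _ => ?_
    rw [appendSeq_add, add_assoc (m + 1), appendSeq_add]

variable [Preorder α]

theorem le_of_forall_lt_le_succ {m : ℕ} {σ : ℕ → α} (h : ∀ i < m, σ i ≤ σ (i + 1))
    {i j : ℕ} (hij : i ≤ j) (hj : j ≤ m) : σ i ≤ σ j := by
  induction j, hij using Nat.le_induction with
  | base => exact le_rfl
  | succ j _ ih => exact (ih (by omega)).trans (h j (by omega))

theorem appendSeq_le_succ {σ₁ σ₂ : ℕ → α} {m m' : ℕ} (h₁ : ∀ i < m, σ₁ i ≤ σ₁ (i + 1))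
    (h : σ₁ m ≤ σ₂ 0) (h₂ : ∀ i < m', σ₂ i ≤ σ₂ (i + 1)) :
    ∀ i < m + 1 + m', appendSeq σ₁ m σ₂ i ≤ appendSeq σ₁ m σ₂ (i + 1) := by
  intro i hi
  rcases lt_trichotomy i m with him | rfl | hmi
  · rw [appendSeq_of_le him.le, appendSeq_of_le him]
    exact h₁ i him
  · rw [appendSeq_of_le le_rfl, appendSeq_succ]
    exact h
  · obtain ⟨j, rfl⟩ : ∃ j, i = m + 1 + j := ⟨i - (m + 1), by omega⟩
    rw [appendSeq_add, add_assoc (m + 1), appendSeq_add]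
    exact h₂ j (by omega)

theorem StrictMono.appendSeq {σ₁ σ₂ : ℕ → α} {m : ℕ} (h₁ : StrictMono σ₁) (h : σ₁ m < σ₂ 0)
    (h₂ : StrictMono σ₂) : StrictMono (appendSeq σ₁ m σ₂) := by
  refine strictMono_nat_of_lt_succ fun i => ?_
  rcases lt_trichotomy i m with him | rfl | hmi
  · rw [appendSeq_of_le him.le, appendSeq_of_le him]
    exact h₁ (Nat.lt_succ_self i)
  · rw [appendSeq_of_le le_rfl, appendSeq_succ]
    exact h
  · obtain ⟨j, rfl⟩ : ∃ j, i = m + 1 + j := ⟨i - (m + 1), by omega⟩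
    rw [appendSeq_add, add_assoc (m + 1), appendSeq_add]
    exact h₂ (Nat.lt_succ_self j)

end Chains

section Variation

variable {α : Type*}

-- `oneVarTP α` and `pVarPow p γ` are, by definition, `partitionSup` of `‖α x y‖` and of
-- `‖γ y - γ x‖ ^ p`.
def partitionSup [Preorder α] (g : α → α → ℝ) (a b : α) : ℝ≥0∞ :=
  ⨆ (m : ℕ) (r : ℕ → α) (_ : r 0 = a ∧ r m = b ∧ ∀ i < m, r i ≤ r (i + 1)),
    ENNReal.ofReal (chainSum g m r)

-- Unlike a partition, a chain only has to lie in `[u, v]` (through `φ`); this makes `chainSup`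
-- monotone in the interval and lets it run over grid indices (`φ = t`).
def IsChainIn [Preorder α] (φ : α → ℝ) (u v : ℝ) (m : ℕ) (σ : ℕ → α) : Prop :=
  u ≤ φ (σ 0) ∧ φ (σ m) ≤ v ∧ ∀ i < m, σ i ≤ σ (i + 1)

def chainSup [Preorder α] (φ : α → ℝ) (g : α → α → ℝ) (u v : ℝ) : ℝ≥0∞ :=
  ⨆ (p : ℕ × (ℕ → α)) (_ : IsChainIn φ u v p.1 p.2), ENNReal.ofReal (chainSum g p.1 p.2)

def IntervalSuperadditive (F : ℝ → ℝ → ℝ≥0∞) : Prop :=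
  ∀ ⦃x y z⦄, x ≤ y → y ≤ z → F x y + F y z ≤ F x z

section Preorder

variable [Preorder α] {φ : α → ℝ} {g : α → α → ℝ} {u v x y : ℝ} {m : ℕ} {σ : ℕ → α} {a b c : α}

theorem ofReal_chainSum_le_chainSup (h : IsChainIn φ u v m σ) :
    ENNReal.ofReal (chainSum g m σ) ≤ chainSup φ g u v :=
  le_iSup₂_of_le (m, σ) h le_rfl

theorem IsChainIn.mono (h : IsChainIn φ u v m σ) (hx : x ≤ u) (hy : v ≤ y) :
    IsChainIn φ x y m σ :=
  ⟨hx.trans h.1, h.2.1.trans hy, h.2.2⟩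

theorem chainSup_mono (hx : x ≤ u) (hy : v ≤ y) : chainSup φ g u v ≤ chainSup φ g x y :=
  iSup₂_le fun _ hp => ofReal_chainSum_le_chainSup (hp.mono hx hy)

theorem ofReal_le_chainSup (hab : a ≤ b) (hu : u ≤ φ a) (hv : φ b ≤ v) :
    ENNReal.ofReal (g a b) ≤ chainSup φ g u v := by
  have h : IsChainIn φ u v 1 fun i => if i = 0 then a else b :=
    ⟨hu, hv, fun i hi => by simpa [Nat.lt_one_iff.mp hi] using hab⟩
  simpa [chainSum] using ofReal_chainSum_le_chainSup (g := g) h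

theorem ofReal_add_le_chainSup (hab : a ≤ b) (hbc : b ≤ c) (hu : u ≤ φ a) (hv : φ c ≤ v) :
    ENNReal.ofReal (g a b + g b c) ≤ chainSup φ g u v := by
  have h : IsChainIn φ u v 2 fun i => if i = 0 then a else if i = 1 then b else c :=
    ⟨hu, hv, fun i hi => by interval_cases i <;> simpa⟩
  simpa [chainSum, Finset.sum_range_succ] using ofReal_chainSum_le_chainSup (g := g) h

end Preorder

section LinearOrder

variable [LinearOrder α] {φ : α → ℝ} {g : α → α → ℝ} {u v x y z : ℝ} {m m' : ℕ}
  {σ σ' : ℕ → α}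

theorem IsChainIn.appendSeq (hφ : StrictMono φ) (h : IsChainIn φ x y m σ)
    (h' : IsChainIn φ y z m' σ') : IsChainIn φ x z (m + 1 + m') (appendSeq σ m σ') := by
  refine ⟨?_, ?_, appendSeq_le_succ h.2.2 (hφ.le_iff_le.mp (h.2.1.trans h'.1)) h'.2.2⟩
  · rw [appendSeq_of_le (Nat.zero_le m)]
    exact h.1
  · rw [appendSeq_add]
    exact h'.2.1

theorem chainSup_add_le (hφ : StrictMono φ) (hg : ∀ a b, 0 ≤ g a b) (hxy : x ≤ y)
    (hyz : y ≤ z) : chainSup φ g x y + chainSup φ g y z ≤ chainSup φ g x z := by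
  by_cases h₁ : ∃ p : ℕ × (ℕ → α), IsChainIn φ x y p.1 p.2
  swap
  · simp only [not_exists] at h₁
    simpa [chainSup, h₁] using chainSup_mono hxy le_rfl
  by_cases h₂ : ∃ p : ℕ × (ℕ → α), IsChainIn φ y z p.1 p.2
  swap
  · simp only [not_exists] at h₂
    simpa [chainSup, h₂] using chainSup_mono le_rfl hyz
  refine ENNReal.biSup_add_biSup_le' h₁ h₂ fun p hp q hq => ?_
  rw [← ENNReal.ofReal_add (chainSum_nonneg hg _ _) (chainSum_nonneg hg _ _)]
  refine le_trans (ENNReal.ofReal_le_ofReal ?_) (ofReal_chainSum_le_chainSup (hp.appendSeq hφ hq))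
  rw [chainSum_appendSeq]
  linarith [hg (p.2 p.1) (q.2 0)]

theorem intervalSuperadditive_chainSup (hφ : StrictMono φ) (hg : ∀ a b, 0 ≤ g a b) :
    IntervalSuperadditive (chainSup φ g) :=
  fun _ _ _ => chainSup_add_le hφ hg

end LinearOrder

theorem chainSup_id_le_partitionSup {g : ℝ → ℝ → ℝ} (hg : ∀ a b, 0 ≤ g a b) {a b u v : ℝ}
    (ha : a ≤ u) (hb : v ≤ b) : chainSup id g u v ≤ partitionSup g a b := by
  refine iSup₂_le fun ⟨m, σ⟩ ⟨h0, hm, hσ⟩ => ?_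
  have hnil (c : ℝ) : ∀ i < 0, (fun _ : ℕ => c) i ≤ (fun _ : ℕ => c) (i + 1) :=
    fun i hi => absurd hi i.not_lt_zero
  refine le_iSup_of_le (0 + 1 + (m + 1 + 0)) <| le_iSup_of_le
    (appendSeq (fun _ => a) 0 (appendSeq σ m fun _ => b)) <| le_iSup_of_le ⟨?_, ?_, ?_⟩ ?_
  · exact appendSeq_of_le le_rfl
  · rw [appendSeq_add, appendSeq_add]
  · refine appendSeq_le_succ (hnil a) ?_ (appendSeq_le_succ hσ (hm.trans hb) (hnil b))
    rw [appendSeq_of_le (Nat.zero_le m)]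
    exact ha.trans h0
  · refine ENNReal.ofReal_le_ofReal ?_
    simp only [chainSum_appendSeq, appendSeq_of_le (Nat.zero_le m)]
    linarith [hg a (σ 0), hg (σ m) b, chainSum_nonneg hg 0 fun _ => a,
      chainSum_nonneg hg 0 fun _ => b]

theorem ofReal_sum_Ico_le_chainSup {φ : ℕ → ℝ} {g : ℕ → ℕ → ℝ} {u v : ℝ} {a b : ℕ} (hab : a ≤ b)
    (hu : u ≤ φ a) (hv : φ b ≤ v) :
    ENNReal.ofReal (∑ j ∈ Finset.Ico a b, g j (j + 1)) ≤ chainSup φ g u v := by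
  have h : IsChainIn φ u v (b - a) (a + ·) :=
    ⟨hu, show φ (a + (b - a)) ≤ v by rwa [Nat.add_sub_cancel' hab], fun i _ => Nat.le_succ _⟩
  simpa [chainSum, Finset.sum_Ico_eq_sum_range, add_assoc] using
    ofReal_chainSum_le_chainSup (g := g) h

theorem exists_strictMono_chainSum_ge {g : ℕ → ℕ → ℝ} (hg : ∀ k, g k k = 0) {m : ℕ}
    {σ : ℕ → ℕ} (hσ : ∀ i < m, σ i ≤ σ (i + 1)) :
    ∃ M σ', StrictMono σ' ∧ σ' M = σ m ∧ chainSum g m σ ≤ chainSum g M σ' := by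
  induction m with
  | zero => exact ⟨0, (σ 0 + ·), strictMono_id.const_add _, rfl, le_rfl⟩
  | succ m ih =>
    obtain ⟨M, σ', hσ', hend, hle⟩ := ih fun i hi => hσ i (by omega)
    rcases (hσ m m.lt_succ_self).eq_or_lt with heq | hlt
    · exact ⟨M, σ', hσ', hend.trans heq, by rw [chainSum_succ, ← heq, hg, add_zero]; exact hle⟩
    · refine ⟨M + 1 + 0, appendSeq σ' M (σ (m + 1) + ·),
        hσ'.appendSeq (by simpa [hend]) (strictMono_id.const_add _), appendSeq_add M 0, ?_⟩
      rw [chainSum_appendSeq, chainSum_succ, hend]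
      simpa [chainSum] using hle

theorem chainSup_le_iSup_strictMono {φ : ℕ → ℝ} {g : ℕ → ℕ → ℝ} (hg : ∀ k, g k k = 0)
    (u v : ℝ) :
    chainSup φ g u v ≤
      ⨆ (m : ℕ) (σ : ℕ → ℕ) (_ : StrictMono σ), ENNReal.ofReal (chainSum g m σ) := by
  refine iSup₂_le fun ⟨m, σ⟩ hσ => ?_
  obtain ⟨M, σ', hσ', -, hle⟩ := exists_strictMono_chainSum_ge hg hσ.2.2
  exact (ENNReal.ofReal_le_ofReal hle).trans (le_iSup₂_of_le M σ' (le_iSup_of_le hσ' le_rfl))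

namespace IntervalSuperadditive

variable {F G : ℝ → ℝ → ℝ≥0∞}

theorem add (hF : IntervalSuperadditive F) (hG : IntervalSuperadditive G) :
    IntervalSuperadditive fun x y => F x y + G x y := by
  intro x y z hxy hyz
  rw [add_add_add_comm]
  exact add_le_add (hF hxy hyz) (hG hxy hyz)

theorem const_mul (hF : IntervalSuperadditive F) (c : ℝ≥0∞) :
    IntervalSuperadditive fun x y => c * F x y := by
  intro x y z hxy hyz
  rw [← mul_add]
  exact mul_le_mul_right (hF hxy hyz) c

theorem partitionSup_le (hF : IntervalSuperadditive F) {g : ℝ → ℝ → ℝ} (hg : ∀ x y, 0 ≤ g x y)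
    {a b : ℝ} (hgF : ∀ x y, a ≤ x → x ≤ y → y ≤ b → ENNReal.ofReal (g x y) ≤ F x y) :
    partitionSup g a b ≤ F a b := by
  refine iSup_le fun m => iSup_le fun r => iSup_le fun ⟨h0, hm, hr⟩ => ?_
  have ha : ∀ i ≤ m, a ≤ r i := fun i hi => h0 ▸ le_of_forall_lt_le_succ hr (Nat.zero_le i) hi
  have hb : ∀ i ≤ m, r i ≤ b := fun i hi => hm ▸ le_of_forall_lt_le_succ hr hi le_rfl
  have key : ∀ k ≤ m, ENNReal.ofReal (chainSum g k r) ≤ F a (r k) := by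
    intro k hk
    induction k with
    | zero => simp [chainSum]
    | succ k ih =>
      rw [chainSum_succ, ENNReal.ofReal_add (chainSum_nonneg hg _ _) (hg _ _)]
      calc _ ≤ F a (r k) + F (r k) (r (k + 1)) :=
            add_le_add (ih (by omega)) (hgF _ _ (ha k (by omega)) (hr k hk) (hb _ hk))
        _ ≤ F a (r (k + 1)) := hF (ha k (by omega)) (hr k hk)
  simpa [hm] using key m le_rfl

end IntervalSuperadditive

end Variation

section Cells

def clampCell (τ : ℕ → ℝ) (c : ℕ) (x : ℝ) : ℝ := max (τ c) (min x (τ (c + 1)))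

def cellSum (τ : ℕ → ℝ) (F : ℝ → ℝ → ℝ≥0∞) (u v : ℝ) : ℝ≥0∞ :=
  ∑' c, F (clampCell τ c u) (clampCell τ c v)

variable {τ : ℕ → ℝ} {c : ℕ} {x : ℝ}

theorem clampCell_mono (τ : ℕ → ℝ) (c : ℕ) : Monotone (clampCell τ c) :=
  fun _ _ h => max_le_max le_rfl (min_le_min h le_rfl)

theorem clampCell_of_mem (h₁ : τ c ≤ x) (h₂ : x ≤ τ (c + 1)) : clampCell τ c x = x := by
  rw [clampCell, min_eq_left h₂, max_eq_right h₁]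

theorem clampCell_of_le (hc : τ c ≤ τ (c + 1)) (hx : x ≤ τ c) : clampCell τ c x = τ c := by
  rw [clampCell, min_eq_left (hx.trans hc), max_eq_left hx]

theorem clampCell_of_ge (hc : τ c ≤ τ (c + 1)) (hx : τ (c + 1) ≤ x) :
    clampCell τ c x = τ (c + 1) := by
  rw [clampCell, min_eq_right hx, max_eq_right hc]

theorem clampCell_mem_Icc (hc : τ c ≤ τ (c + 1)) (x : ℝ) :
    clampCell τ c x ∈ Set.Icc (τ c) (τ (c + 1)) :=
  ⟨le_max_left _ _, max_le hc (min_le_right _ _)⟩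

theorem IntervalSuperadditive.cellSum {F : ℝ → ℝ → ℝ≥0∞} (hF : IntervalSuperadditive F)
    (τ : ℕ → ℝ) : IntervalSuperadditive (cellSum τ F) := by
  intro x y z hxy hyz
  rw [_root_.cellSum, _root_.cellSum, _root_.cellSum, ← ENNReal.tsum_add]
  exact ENNReal.tsum_le_tsum fun c => hF (clampCell_mono τ c hxy) (clampCell_mono τ c hyz)

theorem le_cellSum (hτ : Monotone τ) (F : ℝ → ℝ → ℝ≥0∞) {a b : ℕ} (hab : a ≤ b) {s r : ℝ}
    (hs : τ a ≤ s) (hs' : s ≤ τ (a + 1)) (hr : τ (b + 1) ≤ r) (hr' : r ≤ τ (b + 2)) :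
    F s (τ (a + 1)) + ∑ j ∈ Finset.Ico a b, F (τ (j + 1)) (τ (j + 2)) + F (τ (b + 1)) r ≤
      cellSum τ F s r := by
  have hstep (k : ℕ) : τ k ≤ τ (k + 1) := hτ (Nat.le_succ k)
  have hsum : ∑ c ∈ Finset.Ico a (b + 2), F (clampCell τ c s) (clampCell τ c r) =
      F s (τ (a + 1)) + ∑ j ∈ Finset.Ico a b, F (τ (j + 1)) (τ (j + 2)) + F (τ (b + 1)) r := by
    rw [Finset.sum_Ico_succ_top (by omega), Finset.sum_eq_sum_Ico_succ_bot (by omega),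
      ← Finset.sum_Ico_add', clampCell_of_mem hs hs', clampCell_of_ge (hstep a)
        (hτ (by omega : a + 1 ≤ b + 1) |>.trans hr),
      clampCell_of_le (hstep (b + 1)) (hs'.trans (hτ (by omega))), clampCell_of_mem hr hr']
    congr 2
    refine Finset.sum_congr rfl fun j hj => ?_
    have hj := Finset.mem_Ico.mp hj
    rw [clampCell_of_le (hstep (j + 1)) (hs'.trans (hτ (by omega))),
      clampCell_of_ge (hstep (j + 1)) ((hτ (by omega)).trans hr)]
  exact hsum ▸ ENNReal.sum_le_tsum _

theorem cellSum_chainSup_le_tsum (hτ : Monotone τ) {g : ℝ → ℝ → ℝ} (hg : ∀ x y, 0 ≤ g x y)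
    (u v : ℝ) :
    cellSum τ (chainSup id g) u v ≤ ∑' c, partitionSup g (τ c) (τ (c + 1)) :=
  ENNReal.tsum_le_tsum fun c => chainSup_id_le_partitionSup hg
    (clampCell_mem_Icc (hτ c.le_succ) u).1 (clampCell_mem_Icc (hτ c.le_succ) v).2

theorem exists_mem_cell (hτ : Tendsto τ atTop atTop) (hx : τ 0 ≤ x) :
    ∃ c, τ c ≤ x ∧ x < τ (c + 1) := by
  have hex : ∃ k, x < τ (k + 1) :=
    (((tendsto_add_atTop_iff_nat 1).mpr hτ).eventually_gt_atTop x).exists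
  refine ⟨Nat.find hex, ?_, Nat.find_spec hex⟩
  rcases h : Nat.find hex with _ | k
  · exact hx
  · exact not_lt.mp (Nat.find_min hex (by omega))

def prependZero (t : ℕ → ℝ) : ℕ → ℝ
  | 0 => 0
  | k + 1 => t k

theorem monotone_prependZero {t : ℕ → ℝ} (ht : Monotone t) (h0 : 0 ≤ t 0) :
    Monotone (prependZero t) :=
  monotone_nat_of_le_succ fun
    | 0 => h0
    | k + 1 => ht (Nat.le_succ k)

theorem tendsto_prependZero {t : ℕ → ℝ} (ht : Tendsto t atTop atTop) :
    Tendsto (prependZero t) atTop atTop :=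
  (tendsto_add_atTop_iff_nat 1).mp ht

end Cells

section Chen

def SatisfiesChen (L : V →ₗ[ℝ] V →ₗ[ℝ] W) (γ : ℝ → V) (A : ℝ → ℝ → W) : Prop :=
  ∀ s v r : ℝ, s ≤ v → v ≤ r →
    A s r = A s v + A v r + (2⁻¹ : ℝ) • (L (γ v - γ s) (γ r - γ v) - L (γ r - γ v) (γ v - γ s))

variable {L : V →ₗ[ℝ] V →ₗ[ℝ] W} {γ γ' : ℝ → V} {A A' : ℝ → ℝ → W}

theorem norm_half_bracket_le (hL : ∀ u v : V, ‖L u v‖ ≤ ‖u‖ * ‖v‖) (u v : V) :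
    ‖(2⁻¹ : ℝ) • (L u v - L v u)‖ ≤ ‖u‖ * ‖v‖ := by
  rw [norm_smul, Real.norm_of_nonneg (by norm_num)]
  have := (norm_sub_le (L u v) (L v u)).trans (add_le_add (hL u v) (hL v u))
  linarith [mul_comm ‖u‖ ‖v‖]

namespace SatisfiesChen

theorem apply_self (hA : SatisfiesChen L γ A) (x : ℝ) : A x x = 0 := by
  simpa using hA x x x le_rfl le_rfl

theorem norm_le (hA : SatisfiesChen L γ A) (hL : ∀ u v : V, ‖L u v‖ ≤ ‖u‖ * ‖v‖) {s v r : ℝ}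
    (hsv : s ≤ v) (hvr : v ≤ r) :
    ‖A s r‖ ≤ ‖A s v‖ + ‖A v r‖ + ‖γ v - γ s‖ * ‖γ r - γ v‖ := by
  rw [hA s v r hsv hvr]
  exact norm_add₃_le.trans (add_le_add_right (norm_half_bracket_le hL _ _) _)

theorem sub_eq_sum_sub (hA : SatisfiesChen L γ A) (hA' : SatisfiesChen L γ' A') {t : ℕ → ℝ}
    (ht : Monotone t) (hinc : ∀ k l, γ' (t k) - γ' (t l) = γ (t k) - γ (t l)) {k l : ℕ}
    (hkl : k ≤ l) :
    A (t k) (t l) - A' (t k) (t l) =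
      ∑ j ∈ Finset.Ico k l, (A (t j) (t (j + 1)) - A' (t j) (t (j + 1))) := by
  induction l, hkl using Nat.le_induction with
  | base => simp [hA.apply_self, hA'.apply_self]
  | succ l hkl ih =>
    rw [Finset.sum_Ico_succ_top hkl, ← ih, hA _ _ _ (ht hkl) (ht l.le_succ),
      hA' _ _ _ (ht hkl) (ht l.le_succ), hinc l k, hinc (l + 1) l]
    abel

theorem norm_le_of_grid (hA : SatisfiesChen L γ A) (hA' : SatisfiesChen L γ' A')
    (hL : ∀ u v : V, ‖L u v‖ ≤ ‖u‖ * ‖v‖) {t : ℕ → ℝ} (ht : Monotone t)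
    (hinc : ∀ k l, γ' (t k) - γ' (t l) = γ (t k) - γ (t l)) {a b : ℕ} (hab : a ≤ b) {s r : ℝ}
    (hs : s ≤ t a) (hr : t b ≤ r) :
    ‖A s r‖ ≤
      (‖A s (t a)‖ + ∑ j ∈ Finset.Ico a b, ‖A (t j) (t (j + 1))‖ + ‖A (t b) r‖) +
      (‖γ (t a) - γ s‖ * ‖γ r - γ (t a)‖ + ‖γ (t b) - γ (t a)‖ * ‖γ r - γ (t b)‖) +
      (‖A' (t a) (t b)‖ + ∑ j ∈ Finset.Ico a b, ‖A' (t j) (t (j + 1))‖) := by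
  have h₁ := hA.norm_le hL hs ((ht hab).trans hr)
  have h₂ := hA.norm_le hL (ht hab) hr
  have h₃ : ‖A (t a) (t b)‖ ≤ ‖A' (t a) (t b)‖ +
      ∑ j ∈ Finset.Ico a b, (‖A (t j) (t (j + 1))‖ + ‖A' (t j) (t (j + 1))‖) := by
    rw [← sub_add_cancel (A (t a) (t b)) (A' (t a) (t b)), hA.sub_eq_sum_sub hA' ht hinc hab,
      add_comm]
    exact (norm_add_le _ _).trans (add_le_add_right ((norm_sum_le _ _).trans
      (Finset.sum_le_sum fun j _ => norm_sub_le _ _)) _)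
  rw [Finset.sum_add_distrib] at h₃
  linarith

end SatisfiesChen

end Chen

section AreaBudget

variable {E F : Type*} [NormedAddCommGroup E] [NormedAddCommGroup F] {t : ℕ → ℝ}

def areaBudget (γ : ℝ → E) (A A₁₁ : ℝ → ℝ → F) (t : ℕ → ℝ) (u v : ℝ) : ℝ≥0∞ :=
  cellSum (prependZero t) (chainSup id fun x y => ‖A x y‖) u v +
    2 * chainSup id (fun x y => ‖γ y - γ x‖ ^ (2 : ℝ)) u v +
    2 * chainSup t (fun k l => ‖A₁₁ (t k) (t l)‖) u v

theorem intervalSuperadditive_areaBudget {γ : ℝ → E} {A A₁₁ : ℝ → ℝ → F} (ht : StrictMono t) :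
    IntervalSuperadditive (areaBudget γ A A₁₁ t) :=
  (((intervalSuperadditive_chainSup strictMono_id fun _ _ => norm_nonneg _).cellSum _).add
    ((intervalSuperadditive_chainSup strictMono_id fun _ _ => by positivity).const_mul 2)).add
    ((intervalSuperadditive_chainSup ht fun _ _ => norm_nonneg _).const_mul 2)

theorem areaBudget_le {γ : ℝ → E} {A A₁₁ : ℝ → ℝ → F} (hdiag : ∀ x, A₁₁ x x = 0)
    (ht : StrictMono t) (ht0 : 0 ≤ t 0) (n : ℕ) :
    areaBudget γ A A₁₁ t 0 n ≤
      (oneVarTP A 0 (t 0) + ∑' k, oneVarTP A (t k) (t (k + 1))) + 2 * pVarPowInf 2 γ +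
      2 * ⨆ (m : ℕ) (σ : ℕ → ℕ) (_ : StrictMono σ),
        ENNReal.ofReal (∑ k ∈ Finset.range m, ‖A₁₁ (t (σ k)) (t (σ (k + 1)))‖) := by
  unfold areaBudget
  gcongr ?_ + 2 * ?_ + 2 * ?_
  · calc _ ≤ ∑' c, partitionSup (fun x y => ‖A x y‖) (prependZero t c) (prependZero t (c + 1)) :=
          cellSum_chainSup_le_tsum (monotone_prependZero ht.monotone ht0)
            (fun _ _ => norm_nonneg _) _ _
      _ = _ := tsum_eq_zero_add' ENNReal.summable
  · exact (chainSup_id_le_partitionSup (fun _ _ => by positivity) le_rfl le_rfl).trans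
      (le_iSup (fun n : ℕ => pVarPow 2 γ 0 n) n)
  · exact chainSup_le_iSup_strictMono (fun k => by simp [hdiag]) _ _

theorem ofReal_norm_sub_mul_norm_sub_le_chainSup {γ : ℝ → E} {u v x y z : ℝ} (hxy : x ≤ y)
    (hyz : y ≤ z) (hu : u ≤ x) (hv : z ≤ v) :
    ENNReal.ofReal (‖γ y - γ x‖ * ‖γ z - γ y‖) ≤
      chainSup id (fun x y => ‖γ y - γ x‖ ^ (2 : ℝ)) u v := by
  refine (ENNReal.ofReal_le_ofReal ?_).trans (ofReal_add_le_chainSup hxy hyz hu hv)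
  show _ ≤ ‖γ y - γ x‖ ^ (2 : ℝ) + ‖γ z - γ y‖ ^ (2 : ℝ)
  rw [Real.rpow_two, Real.rpow_two]
  nlinarith [sq_nonneg (‖γ y - γ x‖ - ‖γ z - γ y‖), norm_nonneg (γ y - γ x),
    norm_nonneg (γ z - γ y)]

variable {L : V →ₗ[ℝ] V →ₗ[ℝ] W} {γ γ₁ : ℝ → V} {A A₁₁ : ℝ → ℝ → W}

theorem ofReal_norm_le_areaBudget_of_grid (hA : SatisfiesChen L γ A)
    (hA₁₁ : SatisfiesChen L γ₁ A₁₁) (hL : ∀ u v : V, ‖L u v‖ ≤ ‖u‖ * ‖v‖) (ht : StrictMono t)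
    (ht0 : 0 ≤ t 0) (hinc : ∀ k l, γ₁ (t k) - γ₁ (t l) = γ (t k) - γ (t l)) {a b : ℕ}
    (hab : a ≤ b) {s r : ℝ} (hs : prependZero t a ≤ s) (hs' : s ≤ t a) (hr : t b ≤ r)
    (hr' : r ≤ t (b + 1)) :
    ENNReal.ofReal ‖A s r‖ ≤ areaBudget γ A A₁₁ t s r := by
  refine (ENNReal.ofReal_le_ofReal
    (hA.norm_le_of_grid hA₁₁ hL ht.monotone hinc hab hs' hr)).trans ?_
  have htab := ht.monotone hab
  rw [ENNReal.ofReal_add (by positivity) (by positivity),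
    ENNReal.ofReal_add (by positivity) (by positivity)]
  refine add_le_add (add_le_add ?_ ?_) ?_
  · rw [ENNReal.ofReal_add (by positivity) (by positivity),
      ENNReal.ofReal_add (by positivity) (by positivity),
      ENNReal.ofReal_sum_of_nonneg fun _ _ => norm_nonneg _]
    refine le_trans ?_ (le_cellSum (monotone_prependZero ht.monotone ht0) _ hab hs hs' hr hr')
    gcongr with j
    · exact ofReal_le_chainSup hs' le_rfl le_rfl
    · exact ofReal_le_chainSup (ht.monotone j.le_succ) le_rfl le_rfl
    · exact ofReal_le_chainSup hr le_rfl le_rfl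
  · rw [ENNReal.ofReal_add (by positivity) (by positivity), two_mul]
    exact add_le_add (ofReal_norm_sub_mul_norm_sub_le_chainSup hs' (htab.trans hr) le_rfl le_rfl)
      (ofReal_norm_sub_mul_norm_sub_le_chainSup htab hr hs' le_rfl)
  · rw [ENNReal.ofReal_add (by positivity) (by positivity), two_mul]
    exact add_le_add (ofReal_le_chainSup (g := fun k l => ‖A₁₁ (t k) (t l)‖) hab hs' hr)
      (ofReal_sum_Ico_le_chainSup hab hs' hr)

theorem ofReal_norm_le_areaBudget (hA : SatisfiesChen L γ A) (hA₁₁ : SatisfiesChen L γ₁ A₁₁)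
    (hL : ∀ u v : V, ‖L u v‖ ≤ ‖u‖ * ‖v‖) (ht : StrictMono t) (htop : Tendsto t atTop atTop)
    (ht0 : 0 ≤ t 0) (hinc : ∀ k l, γ₁ (t k) - γ₁ (t l) = γ (t k) - γ (t l)) {s r : ℝ}
    (hs : 0 ≤ s) (hsr : s ≤ r) :
    ENNReal.ofReal ‖A s r‖ ≤ areaBudget γ A A₁₁ t s r := by
  obtain ⟨a, hsa, has⟩ := exists_mem_cell (tendsto_prependZero htop) (x := s) hs
  obtain ⟨d, hrd, hrd'⟩ := exists_mem_cell (tendsto_prependZero htop) (x := r) (hs.trans hsr)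
  rcases lt_trichotomy a d with had | rfl | hda
  · obtain ⟨b, rfl⟩ : ∃ b, d = b + 1 := ⟨d - 1, by omega⟩
    exact ofReal_norm_le_areaBudget_of_grid hA hA₁₁ hL ht ht0 hinc (by omega) hsa has.le hrd
      hrd'.le
  · calc ENNReal.ofReal ‖A s r‖
        ≤ chainSup id (fun x y => ‖A x y‖) (clampCell (prependZero t) a s)
            (clampCell (prependZero t) a r) := by
          rw [clampCell_of_mem hsa has.le, clampCell_of_mem hrd hrd'.le]
          exact ofReal_le_chainSup hsr le_rfl le_rfl
      _ ≤ cellSum (prependZero t) (chainSup id fun x y => ‖A x y‖) s r := ENNReal.le_tsum a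
      _ ≤ areaBudget γ A A₁₁ t s r := le_self_add.trans le_self_add
  · linarith [monotone_prependZero ht.monotone ht0 (Nat.succ_le_of_lt hda)]

end AreaBudget

theorem stmt8_general (γ γ₂ γ₁ : ℝ → V)
    (hdiff : ∀ s, γ₁ s = γ s - γ₂ s)
    (t : ℕ → ℝ) (ht0 : 0 < t 0) (hmono : StrictMono t)
    (htend : Tendsto t atTop atTop)
    (c : V) (hc : ∀ n : ℕ, γ₂ (t n) = c)
    (L : V →ₗ[ℝ] V →ₗ[ℝ] W) (hL : ∀ u v : V, ‖L u v‖ ≤ ‖u‖ * ‖v‖)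
    (A A₁₁ : ℝ → ℝ → W)
    (hA : ∀ s v r : ℝ, s ≤ v → v ≤ r →
      A s r = A s v + A v r + (2⁻¹ : ℝ) •
        (L (γ v - γ s) (γ r - γ v) - L (γ r - γ v) (γ v - γ s)))
    (hA₁₁ : ∀ s v r : ℝ, s ≤ v → v ≤ r →
      A₁₁ s r = A₁₁ s v + A₁₁ v r + (2⁻¹ : ℝ) •
        (L (γ₁ v - γ₁ s) (γ₁ r - γ₁ v) - L (γ₁ r - γ₁ v) (γ₁ v - γ₁ s))) :
    oneVarTPInf A ≤
      oneVarTP A 0 (t 0) + 2 * pVarPowInf 2 γ +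
      2 * (∑' n : ℕ, oneVarTP A (t n) (t (n + 1))) +
      2 * ⨆ (m : ℕ) (σ : ℕ → ℕ) (_ : StrictMono σ),
        ENNReal.ofReal (∑ k ∈ Finset.range m, ‖A₁₁ (t (σ k)) (t (σ (k + 1)))‖) := by
  have hinc (k l : ℕ) : γ₁ (t k) - γ₁ (t l) = γ (t k) - γ (t l) := by
    rw [hdiff, hdiff, hc, hc]
    abel
  refine iSup_le fun n => ?_
  calc oneVarTP A 0 n ≤ areaBudget γ A A₁₁ t 0 n :=
        (intervalSuperadditive_areaBudget hmono).partitionSup_le (fun _ _ => norm_nonneg _)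
          fun _ _ hx hxy _ => ofReal_norm_le_areaBudget hA hA₁₁ hL hmono htend ht0.le hinc hx hxy
    _ ≤ _ := areaBudget_le (SatisfiesChen.apply_self hA₁₁) hmono ht0.le n
    _ ≤ _ := by
      rw [add_right_comm (oneVarTP A 0 (t 0))]
      gcongr
      exact le_mul_of_one_le_left' one_le_two

/-- Let `γ, γ²` be continuous paths of locally bounded variation with
`γ²(t n) = c` along a strictly increasing sequence `t n → ∞` of positive times, and set
`γ¹ := γ − γ²`.  Let `A` be the area of `γ` and `A¹¹` the area of `γ¹`: both satisfy
Chen's identity with bracket `[u,v] = u⊗v − v⊗u` (the tensor product being modelled by a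
bilinear map `L` with `‖L u v‖ ≤ ‖u‖‖v‖`).  Then
`‖A‖_{1-var,[0,∞)} ≤ ‖A‖_{1-var,[0,t 0]} + 2‖γ‖²_{2-var,[0,∞)}
  + 2 ∑ₙ ‖A‖_{1-var,[tₙ,tₙ₊₁]} + 2 sup_{(n_k)} ∑_k ‖A¹¹(t_{n_k}, t_{n_{k+1}})‖`. -/
theorem stmt8 (γ γ₂ γ₁ : ℝ → V) (hγ : Continuous γ) (hγ₂ : Continuous γ₂)
    (hBV : ∀ n : ℕ, pVarPow 1 γ 0 n < ⊤ ∧ pVarPow 1 γ₂ 0 n < ⊤)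
    (hdiff : ∀ s, γ₁ s = γ s - γ₂ s)
    (t : ℕ → ℝ) (ht0 : 0 < t 0) (hmono : StrictMono t)
    (htend : Tendsto t atTop atTop)
    (c : V) (hc : ∀ n : ℕ, γ₂ (t n) = c)
    (L : V →ₗ[ℝ] V →ₗ[ℝ] W) (hL : ∀ u v : V, ‖L u v‖ ≤ ‖u‖ * ‖v‖)
    (A A₁₁ : ℝ → ℝ → W)
    (hA : ∀ s v r : ℝ, s ≤ v → v ≤ r →
      A s r = A s v + A v r + (2⁻¹ : ℝ) •
        (L (γ v - γ s) (γ r - γ v) - L (γ r - γ v) (γ v - γ s)))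
    (hA₁₁ : ∀ s v r : ℝ, s ≤ v → v ≤ r →
      A₁₁ s r = A₁₁ s v + A₁₁ v r + (2⁻¹ : ℝ) •
        (L (γ₁ v - γ₁ s) (γ₁ r - γ₁ v) - L (γ₁ r - γ₁ v) (γ₁ v - γ₁ s))) :
    oneVarTPInf A ≤
      oneVarTP A 0 (t 0) + 2 * pVarPowInf 2 γ +
      2 * (∑' n : ℕ, oneVarTP A (t n) (t (n + 1))) +
      2 * ⨆ (m : ℕ) (σ : ℕ → ℕ) (_ : StrictMono σ),
        ENNReal.ofReal (∑ k ∈ Finset.range m, ‖A₁₁ (t (σ k)) (t (σ (k + 1)))‖) :=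
  stmt8_general γ γ₂ γ₁ hdiff t ht0 hmono htend c hc L hL A A₁₁ hA hA₁₁

end
end

section
/- Let γ : [0,n] → V be a continuous piecewise linear path into a Banach space, linear on each [k, k+1] for integers k, and let A be its area. Then for any dyadic interval I = [m·2^j, (m+1)·2^j] ⊆ [0,n], ‖A(I)‖ ≤ Σ_{I' ∈ B_I, I' ≠ I} ‖γ(I')‖², where B_I is the set of dyadic intervals contained in I and γ(I') is the increment of γ over I'. -/
open Set

/-- Let `γ : [0,n] → V` be continuous and linear on each `[k, k+1]`, and let
`A` be its area, satisfying `A(k, k+1) = 0` (the area vanishes on level-0 intervals since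
`γ` is linear there) and Chen's inequality
`‖A(s,t)‖ ≤ ‖A(s,u)‖ + ‖A(u,t)‖ + ‖γ(u)−γ(s)‖·‖γ(t)−γ(u)‖`.  Then for any dyadic
interval `I = [q·2^j, (q+1)·2^j] ⊆ [0,n]`,
`‖A(I)‖ ≤ ∑_{I' ∈ B_I, I' ≠ I} ‖γ(I')‖²`, the sum being over dyadic intervals
`I' = [k·2^l, (k+1)·2^l]` strictly inside `I` (encoded as pairs `(l, k)`). -/
theorem stmt9 {V : Type*} [NormedAddCommGroup V] [NormedSpace ℝ V]
    {W : Type*} [NormedAddCommGroup W]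
    (n : ℕ) (γ : ℝ → V)
    (hlin : ∀ k : ℕ, ∀ s ∈ Icc (k : ℝ) (k + 1),
      γ s = γ k + (s - k) • (γ (k + 1) - γ k))
    (A : ℝ → ℝ → W)
    (hA0 : ∀ k : ℕ, A k (k + 1) = 0)
    (hChen : ∀ s u t : ℝ, s ≤ u → u ≤ t →
      ‖A s t‖ ≤ ‖A s u‖ + ‖A u t‖ + ‖γ u - γ s‖ * ‖γ t - γ u‖)
    (j q : ℕ) (hI : (q + 1) * 2 ^ j ≤ n) :
    ‖A (q * 2 ^ j : ℕ) ((q + 1) * 2 ^ j : ℕ)‖ ≤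
      ∑ p ∈ ((Finset.range (j + 1)) ×ˢ (Finset.range ((q + 1) * 2 ^ j + 1))).filter
          (fun p => q * 2 ^ j ≤ p.2 * 2 ^ p.1 ∧ (p.2 + 1) * 2 ^ p.1 ≤ (q + 1) * 2 ^ j ∧
            ¬(p.1 = j ∧ p.2 = q)),
        ‖γ ((p.2 + 1) * 2 ^ p.1 : ℕ) - γ (p.2 * 2 ^ p.1 : ℕ)‖ ^ 2 := by
  induction j generalizing q with
  | zero =>
    have e : ((q * 2 ^ 0 : ℕ) : ℝ) = (q : ℝ) := by push_cast; ring
    have e2 : (((q + 1) * 2 ^ 0 : ℕ) : ℝ) = ((q : ℝ) + 1) := by push_cast; ring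
    rw [e, e2, hA0 q, norm_zero]
    exact Finset.sum_nonneg (fun p _ => by positivity)
  | succ j IH =>
    have hpj : 0 < 2 ^ j := Nat.two_pow_pos j
    have m1 : q * 2 ^ (j + 1) = 2 * q * 2 ^ j := by ring
    have m2 : (q + 1) * 2 ^ (j + 1) = (2 * q + 1 + 1) * 2 ^ j := by ring
    rw [m2] at hI
    rw [m1, m2]
    have hL : (2 * q + 1) * 2 ^ j ≤ n :=
      le_trans (Nat.mul_le_mul_right _ (by omega)) hI
    have IHL := IH (2 * q) hL
    have IHR := IH (2 * q + 1) hI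
    set L := ((Finset.range (j + 1)) ×ˢ (Finset.range ((2 * q + 1) * 2 ^ j + 1))).filter
        (fun p => 2 * q * 2 ^ j ≤ p.2 * 2 ^ p.1 ∧
          (p.2 + 1) * 2 ^ p.1 ≤ (2 * q + 1) * 2 ^ j ∧ ¬(p.1 = j ∧ p.2 = 2 * q)) with hLdef
    set R := ((Finset.range (j + 1)) ×ˢ (Finset.range ((2 * q + 1 + 1) * 2 ^ j + 1))).filter
        (fun p => (2 * q + 1) * 2 ^ j ≤ p.2 * 2 ^ p.1 ∧
          (p.2 + 1) * 2 ^ p.1 ≤ (2 * q + 1 + 1) * 2 ^ j ∧ ¬(p.1 = j ∧ p.2 = 2 * q + 1)) with hRdef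
    set T := ((Finset.range (j + 1 + 1)) ×ˢ (Finset.range ((2 * q + 1 + 1) * 2 ^ j + 1))).filter
        (fun p => 2 * q * 2 ^ j ≤ p.2 * 2 ^ p.1 ∧
          (p.2 + 1) * 2 ^ p.1 ≤ (2 * q + 1 + 1) * 2 ^ j ∧ ¬(p.1 = j + 1 ∧ p.2 = q)) with hTdef
    -- basic membership facts
    have memL : ∀ p : ℕ × ℕ, p ∈ L ↔ (p.1 < j + 1 ∧ p.2 < (2 * q + 1) * 2 ^ j + 1) ∧
        2 * q * 2 ^ j ≤ p.2 * 2 ^ p.1 ∧ (p.2 + 1) * 2 ^ p.1 ≤ (2 * q + 1) * 2 ^ j ∧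
        ¬(p.1 = j ∧ p.2 = 2 * q) := by
      intro p
      simp [hLdef, Finset.mem_filter, Finset.mem_product, Finset.mem_range]
    have memR : ∀ p : ℕ × ℕ, p ∈ R ↔ (p.1 < j + 1 ∧ p.2 < (2 * q + 1 + 1) * 2 ^ j + 1) ∧
        (2 * q + 1) * 2 ^ j ≤ p.2 * 2 ^ p.1 ∧ (p.2 + 1) * 2 ^ p.1 ≤ (2 * q + 1 + 1) * 2 ^ j ∧
        ¬(p.1 = j ∧ p.2 = 2 * q + 1) := by
      intro p
      simp [hRdef, Finset.mem_filter, Finset.mem_product, Finset.mem_range]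
    have memT : ∀ p : ℕ × ℕ, p ∈ T ↔ (p.1 < j + 1 + 1 ∧ p.2 < (2 * q + 1 + 1) * 2 ^ j + 1) ∧
        2 * q * 2 ^ j ≤ p.2 * 2 ^ p.1 ∧ (p.2 + 1) * 2 ^ p.1 ≤ (2 * q + 1 + 1) * 2 ^ j ∧
        ¬(p.1 = j + 1 ∧ p.2 = q) := by
      intro p
      simp [hTdef, Finset.mem_filter, Finset.mem_product, Finset.mem_range]
    have hdisj : Disjoint L R := by
      rw [Finset.disjoint_left]
      intro p hp hp'
      rw [memL] at hp; rw [memR] at hp'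
      have h1 : (p.2 + 1) * 2 ^ p.1 ≤ (2 * q + 1) * 2 ^ j := hp.2.2.1
      have h2 : (2 * q + 1) * 2 ^ j ≤ p.2 * 2 ^ p.1 := hp'.2.1
      have : (p.2 + 1) * 2 ^ p.1 ≤ p.2 * 2 ^ p.1 := le_trans h1 h2
      have := Nat.le_of_mul_le_mul_right this (Nat.two_pow_pos p.1)
      omega
    have hq1 : ((j, 2 * q) : ℕ × ℕ) ∉ L ∪ R := by
      rw [Finset.mem_union, memL, memR]
      rintro (⟨-, -, -, h⟩ | ⟨-, h, -, -⟩)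
      · exact h ⟨rfl, rfl⟩
      · exact absurd (Nat.le_of_mul_le_mul_right
          (show (2 * q + 1) * 2 ^ j ≤ 2 * q * 2 ^ j from h) hpj) (by omega)
    have hq2 : ((j, 2 * q + 1) : ℕ × ℕ) ∉ L ∪ R := by
      rw [Finset.mem_union, memL, memR]
      rintro (⟨-, -, h, -⟩ | ⟨-, -, -, h⟩)
      · exact absurd (Nat.le_of_mul_le_mul_right
          (show (2 * q + 1 + 1) * 2 ^ j ≤ (2 * q + 1) * 2 ^ j from h) hpj) (by omega)
      · exact h ⟨rfl, rfl⟩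
    have hq12 : ((j, 2 * q) : ℕ × ℕ) ∉ insert ((j, 2 * q + 1) : ℕ × ℕ) (L ∪ R) := by
      rw [Finset.mem_insert]
      rintro (h | h)
      · exact absurd (congrArg Prod.snd h) (by omega)
      · exact hq1 h
    -- subset
    have hsub : insert ((j, 2 * q) : ℕ × ℕ) (insert ((j, 2 * q + 1) : ℕ × ℕ) (L ∪ R)) ⊆ T := by
      intro p hp
      rw [memT]
      rcases Finset.mem_insert.mp hp with h | hp
      · subst h
        dsimp only
        refine ⟨⟨by omega, ?_⟩, le_refl _, Nat.mul_le_mul_right _ (by omega), by omega⟩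
        calc 2 * q < 2 * q + 2 := by omega
          _ ≤ (2 * q + 1 + 1) * 2 ^ j := Nat.le_mul_of_pos_right _ hpj
          _ < (2 * q + 1 + 1) * 2 ^ j + 1 := by omega
      rcases Finset.mem_insert.mp hp with h | hp
      · subst h
        dsimp only
        refine ⟨⟨by omega, ?_⟩, Nat.mul_le_mul_right _ (by omega), le_refl _, by omega⟩
        calc 2 * q + 1 < 2 * q + 2 := by omega
          _ ≤ (2 * q + 1 + 1) * 2 ^ j := Nat.le_mul_of_pos_right _ hpj
          _ < (2 * q + 1 + 1) * 2 ^ j + 1 := by omega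
      rcases Finset.mem_union.mp hp with h | h
      · rw [memL] at h
        obtain ⟨⟨hr1, hr2⟩, c1, c2, _⟩ := h
        refine ⟨⟨by omega, ?_⟩, c1, le_trans c2 (Nat.mul_le_mul_right _ (by omega)), by omega⟩
        have : (2 * q + 1) * 2 ^ j ≤ (2 * q + 1 + 1) * 2 ^ j := Nat.mul_le_mul_right _ (by omega)
        omega
      · rw [memR] at h
        obtain ⟨⟨hr1, hr2⟩, c1, c2, _⟩ := h
        have c1' : 2 * q * 2 ^ j ≤ p.2 * 2 ^ p.1 :=
          le_trans (Nat.mul_le_mul_right _ (by omega)) c1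
        exact ⟨⟨by omega, hr2⟩, c1', c2, by omega⟩
    -- the Chen step
    have hsu : ((2 * q * 2 ^ j : ℕ) : ℝ) ≤ (((2 * q + 1) * 2 ^ j : ℕ) : ℝ) := by
      exact_mod_cast Nat.mul_le_mul_right _ (by omega)
    have hut : (((2 * q + 1) * 2 ^ j : ℕ) : ℝ) ≤ (((2 * q + 1 + 1) * 2 ^ j : ℕ) : ℝ) := by
      exact_mod_cast Nat.mul_le_mul_right _ (by omega)
    set a : ℝ := ‖γ (((2 * q + 1) * 2 ^ j : ℕ) : ℝ) - γ ((2 * q * 2 ^ j : ℕ) : ℝ)‖ with ha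
    set b : ℝ := ‖γ (((2 * q + 1 + 1) * 2 ^ j : ℕ) : ℝ) - γ (((2 * q + 1) * 2 ^ j : ℕ) : ℝ)‖ with hb
    have hab : a * b ≤ a ^ 2 + b ^ 2 := by nlinarith [sq_nonneg (a - b), sq_nonneg a, sq_nonneg b]
    have key := hChen ((2 * q * 2 ^ j : ℕ) : ℝ) (((2 * q + 1) * 2 ^ j : ℕ) : ℝ)
      (((2 * q + 1 + 1) * 2 ^ j : ℕ) : ℝ) hsu hut
    have sumS : ∑ p ∈ insert ((j, 2 * q) : ℕ × ℕ) (insert ((j, 2 * q + 1) : ℕ × ℕ) (L ∪ R)),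
        ‖γ (((p.2 + 1) * 2 ^ p.1 : ℕ) : ℝ) - γ ((p.2 * 2 ^ p.1 : ℕ) : ℝ)‖ ^ 2
        = a ^ 2 + (b ^ 2 + ((∑ p ∈ L, ‖γ (((p.2 + 1) * 2 ^ p.1 : ℕ) : ℝ) - γ ((p.2 * 2 ^ p.1 : ℕ) : ℝ)‖ ^ 2)
          + ∑ p ∈ R, ‖γ (((p.2 + 1) * 2 ^ p.1 : ℕ) : ℝ) - γ ((p.2 * 2 ^ p.1 : ℕ) : ℝ)‖ ^ 2)) := by
      rw [Finset.sum_insert hq12, Finset.sum_insert hq2, Finset.sum_union hdisj]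
    calc ‖A ((2 * q * 2 ^ j : ℕ) : ℝ) (((2 * q + 1 + 1) * 2 ^ j : ℕ) : ℝ)‖
        ≤ ‖A ((2 * q * 2 ^ j : ℕ) : ℝ) (((2 * q + 1) * 2 ^ j : ℕ) : ℝ)‖ +
          ‖A (((2 * q + 1) * 2 ^ j : ℕ) : ℝ) (((2 * q + 1 + 1) * 2 ^ j : ℕ) : ℝ)‖ + a * b := key
      _ ≤ (∑ p ∈ L, ‖γ (((p.2 + 1) * 2 ^ p.1 : ℕ) : ℝ) - γ ((p.2 * 2 ^ p.1 : ℕ) : ℝ)‖ ^ 2)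
          + (∑ p ∈ R, ‖γ (((p.2 + 1) * 2 ^ p.1 : ℕ) : ℝ) - γ ((p.2 * 2 ^ p.1 : ℕ) : ℝ)‖ ^ 2)
          + (a ^ 2 + b ^ 2) := add_le_add (add_le_add IHL IHR) hab
      _ = ∑ p ∈ insert ((j, 2 * q) : ℕ × ℕ) (insert ((j, 2 * q + 1) : ℕ × ℕ) (L ∪ R)),
          ‖γ (((p.2 + 1) * 2 ^ p.1 : ℕ) : ℝ) - γ ((p.2 * 2 ^ p.1 : ℕ) : ℝ)‖ ^ 2 := by
          rw [sumS]; ring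
      _ ≤ ∑ p ∈ T, ‖γ (((p.2 + 1) * 2 ^ p.1 : ℕ) : ℝ) - γ ((p.2 * 2 ^ p.1 : ℕ) : ℝ)‖ ^ 2 :=
          Finset.sum_le_sum_of_subset_of_nonneg hsub (fun p _ _ => by positivity)
end

section
/- Every non-dyadic integer interval J can be written as a disjoint union J = J¹ ∪ J² of two intervals of positive length such that there exist disjoint dyadic intervals I¹, I² with Jⁱ ⊆ Iⁱ and |Jⁱ| > (1/2)·|Iⁱ| for i = 1, 2. -/
/-!
Let `x` be a point of `(a, b)` of maximal `2`-adic valuation `j`. Then `x` is an odd multiple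
of `2^j`, so `x - 2^j` and `x + 2^j` are multiples of `2^(j+1)` and hence lie outside `(a, b)`:
`[a, b] ⊆ [x - 2^j, x + 2^j]`. Split `[a, b]` at `x`. Each half has length `d ≤ 2^j`; the least
power `2^i ≥ d` still divides `x`, so the dyadic intervals `[x - 2^i, x]` and `[x, x + 2^i]`
cover the halves, and `2^i < 2d` by minimality.
-/

namespace Nat

theorem pow_clog_lt_mul_self {b n : ℕ} (hb : 1 < b) (hn : 0 < n) : b ^ clog b n < b * n := by
  rcases (Nat.one_le_iff_ne_zero.mpr hn.ne').eq_or_lt with rfl | hn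
  · simpa using hb
  · have hpos : 0 < clog b n := clog_pos hb hn
    calc b ^ clog b n = b * b ^ (clog b n - 1) := by
          rw [← _root_.pow_succ', Nat.sub_add_cancel hpos]
      _ < b * n := Nat.mul_lt_mul_of_pos_left (pow_pred_clog_lt_self hb hn) (by omega)

theorem exists_pow_two_dvd_le_pow_lt_two_mul {x j d : ℕ} (hx : 2 ^ j ∣ x) (hd : 0 < d)
    (hdj : d ≤ 2 ^ j) : ∃ i, 2 ^ i ∣ x ∧ d ≤ 2 ^ i ∧ 2 ^ i < 2 * d :=
  ⟨clog 2 d, (pow_dvd_pow 2 (clog_le_of_le_pow hdj)).trans hx, le_pow_clog one_lt_two d,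
    pow_clog_lt_mul_self one_lt_two hd⟩

theorem exists_dyadic_ending_at {x j d : ℕ} (hx : 2 ^ j ∣ x) (hd : 0 < d) (hdj : d ≤ 2 ^ j)
    (hdx : d ≤ x) : ∃ i k, k * 2 ^ i ≤ x - d ∧ (k + 1) * 2 ^ i = x ∧ 2 ^ i < 2 * d := by
  obtain ⟨i, ⟨q, rfl⟩, hdi, hid⟩ := exists_pow_two_dvd_le_pow_lt_two_mul hx hd hdj
  obtain ⟨k, rfl⟩ : ∃ k, q = k + 1 := exists_eq_succ_of_ne_zero (by rintro rfl; simp at hdx; omega)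
  refine ⟨i, k, ?_, by ring, hid⟩
  have : 2 ^ i * (k + 1) = k * 2 ^ i + 2 ^ i := by ring
  omega

theorem exists_dyadic_starting_at {x j d : ℕ} (hx : 2 ^ j ∣ x) (hd : 0 < d) (hdj : d ≤ 2 ^ j) :
    ∃ i k, k * 2 ^ i = x ∧ x + d ≤ (k + 1) * 2 ^ i ∧ 2 ^ i < 2 * d := by
  obtain ⟨i, ⟨k, rfl⟩, hdi, hid⟩ := exists_pow_two_dvd_le_pow_lt_two_mul hx hd hdj
  refine ⟨i, k, by ring, ?_, hid⟩
  have : (k + 1) * 2 ^ i = 2 ^ i * k + 2 ^ i := by ring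
  omega

theorem exists_mem_Ioo_pow_two_dvd_Icc_subset {a b : ℕ} (hab : a + 1 < b) :
    ∃ x j, a < x ∧ x < b ∧ 2 ^ j ∣ x ∧ x ≤ a + 2 ^ j ∧ b ≤ x + 2 ^ j := by
  have : Fact (Nat.Prime 2) := ⟨prime_two⟩
  obtain ⟨x, hx, hmax⟩ := Finset.exists_max_image (Finset.Ioo a b) (padicValNat 2)
    ⟨a + 1, by simp only [Finset.mem_Ioo]; omega⟩
  rw [Finset.mem_Ioo] at hx
  have hx0 : x ≠ 0 := by omega
  set j := padicValNat 2 x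
  have hbeyond : ∀ y, 2 ^ (j + 1) ∣ y → y ≤ a ∨ b ≤ y := fun y hy => by
    by_contra! hmem
    have := (padicValNat_dvd_iff_le (by omega)).mp hy
    have := hmax y (Finset.mem_Ioo.mpr hmem)
    omega
  have hdvd : 2 ^ j ∣ x := pow_padicValNat_dvd
  obtain ⟨c, hc⟩ : ∃ c, x = 2 ^ (j + 1) * c + 2 ^ j := by
    obtain ⟨m, hm⟩ := hdvd
    obtain ⟨c, rfl⟩ : Odd m := by
      rw [Nat.odd_iff, ← Nat.two_dvd_ne_zero]
      rintro ⟨c, rfl⟩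
      exact pow_succ_padicValNat_not_dvd (p := 2) hx0 ⟨c, hm.trans (by ring)⟩
    exact ⟨c, hm.trans (by ring)⟩
  have hlow := hbeyond (2 ^ (j + 1) * c) (dvd_mul_right _ _)
  have hhigh := hbeyond (2 ^ (j + 1) * (c + 1)) (dvd_mul_right _ _)
  have hhigh_eq : 2 ^ (j + 1) * (c + 1) = x + 2 ^ j := by rw [hc]; ring
  exact ⟨x, j, hx.1, hx.2, hdvd, by omega, by omega⟩

end Nat

/-- Every non-dyadic integer interval `J = [a, b]` splits at some interior
point `x` into `J¹ = [a, x]` and `J² = [x, b]`, both of positive length, such that there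
exist dyadic intervals `I¹ = [k₁·2^{j₁}, (k₁+1)·2^{j₁}]` and `I² = [k₂·2^{j₂}, (k₂+1)·2^{j₂}]`
with disjoint interiors, `Jⁱ ⊆ Iⁱ`, and `|Jⁱ| > (1/2)|Iⁱ|` for `i = 1, 2`. -/
theorem stmt10 (a b : ℕ) (hab : a < b)
    (hnd : ¬ ∃ j k : ℕ, a = k * 2 ^ j ∧ b = (k + 1) * 2 ^ j) :
    ∃ x : ℕ, a < x ∧ x < b ∧
      ∃ j₁ k₁ j₂ k₂ : ℕ,
        -- J¹ = [a, x] ⊆ I¹, J² = [x, b] ⊆ I²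
        k₁ * 2 ^ j₁ ≤ a ∧ x ≤ (k₁ + 1) * 2 ^ j₁ ∧
        k₂ * 2 ^ j₂ ≤ x ∧ b ≤ (k₂ + 1) * 2 ^ j₂ ∧
        -- I¹ and I² have disjoint interiors
        ((k₁ + 1) * 2 ^ j₁ ≤ k₂ * 2 ^ j₂ ∨ (k₂ + 1) * 2 ^ j₂ ≤ k₁ * 2 ^ j₁) ∧
        -- |Jⁱ| > (1/2)|Iⁱ|
        2 ^ j₁ < 2 * (x - a) ∧ 2 ^ j₂ < 2 * (b - x) := by
  have hab' : a + 1 < b := by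
    by_contra! h
    exact hnd ⟨0, a, by simp, by simp; omega⟩
  obtain ⟨x, j, hax, hxb, hdvd, hxa, hbx⟩ := Nat.exists_mem_Ioo_pow_two_dvd_Icc_subset hab'
  obtain ⟨j₁, k₁, hk₁, hx₁, hj₁⟩ :=
    Nat.exists_dyadic_ending_at hdvd (d := x - a) (by omega) (by omega) (by omega)
  obtain ⟨j₂, k₂, hx₂, hk₂, hj₂⟩ :=
    Nat.exists_dyadic_starting_at hdvd (d := b - x) (by omega) (by omega)
  refine ⟨x, hax, hxb, j₁, k₁, j₂, k₂, by omega, hx₁.ge, hx₂.le, by omega,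
    Or.inl (hx₁.trans hx₂.symm).le, hj₁, hj₂⟩
end

section
/- Suppose g : ℝ → ℝ satisfies g(x) = g(−x) and g(x) = g(π − x) for all x ∈ ℝ. Then for all natural numbers m ≠ n, ∫_{−π}^{π} ∫_{−π}^{π} Re((e^{imu} − e^{imv}) · conj(e^{inu} − e^{inv})) · g((u−v)/2) du dv = 0. -/
open Real Set MeasureTheory

/-- If `g : ℝ → ℝ` satisfies `g(x) = g(−x)` and `g(x) = g(π − x)`, then for
natural numbers `m ≠ n` (with the integrand integrable on `[−π,π]²`),
`∫∫ Re((e^{imu} − e^{imv}) conj(e^{inu} − e^{inv})) g((u−v)/2) du dv = 0`. -/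
theorem stmt12 (g : ℝ → ℝ)
    (hsym : ∀ x : ℝ, g x = g (-x))
    (hsym' : ∀ x : ℝ, g x = g (π - x))
    (m n : ℕ) (hmn : m ≠ n)
    (hint : IntegrableOn
      (fun p : ℝ × ℝ =>
        ((Complex.exp (Complex.I * m * p.1) - Complex.exp (Complex.I * m * p.2)) *
          (starRingEnd ℂ)
            (Complex.exp (Complex.I * n * p.1) - Complex.exp (Complex.I * n * p.2))).re *
        g ((p.1 - p.2) / 2))
      (Icc (-π) π ×ˢ Icc (-π) π)) :
    ∫ p in Icc (-π) π ×ˢ Icc (-π) π,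
        ((Complex.exp (Complex.I * m * p.1) - Complex.exp (Complex.I * m * p.2)) *
          (starRingEnd ℂ)
            (Complex.exp (Complex.I * n * p.1) - Complex.exp (Complex.I * n * p.2))).re *
        g ((p.1 - p.2) / 2) = 0 := by
  set f : ℝ → ℝ → ℝ := fun u v =>
    ((Complex.exp (Complex.I * m * u) - Complex.exp (Complex.I * m * v)) *
      (starRingEnd ℂ)
        (Complex.exp (Complex.I * n * u) - Complex.exp (Complex.I * n * v))).re *
    g ((u - v) / 2) with hfdef
  have hk : (m : ℝ) - n ≠ 0 := sub_ne_zero.mpr (by exact_mod_cast hmn)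
  set c : ℝ := π / ((m : ℝ) - n) with hcdef
  -- g has period π
  have hgp : ∀ x : ℝ, g (x + π) = g x := by
    intro x
    rw [hsym' (x + π), show π - (x + π) = -x by ring, ← hsym]
  -- exp periodicity
  have eper : ∀ (j : ℕ) (x : ℝ), Complex.exp (Complex.I * j * ((x + 2 * π : ℝ) : ℂ)) =
      Complex.exp (Complex.I * j * x) := by
    intro j x
    rw [show (Complex.I * j * ((x + 2 * π : ℝ) : ℂ)) =
        Complex.I * j * x + (j : ℤ) * (2 * π * Complex.I) by push_cast; ring,
      Complex.exp_add, Complex.exp_int_mul_two_pi_mul_I, mul_one]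
  have hfu : ∀ u v : ℝ, f (u + 2 * π) v = f u v := by
    intro u v
    simp only [hfdef]
    rw [eper, eper, show (u + 2 * π - v) / 2 = (u - v) / 2 + π by ring, hgp]
  have hfv : ∀ u v : ℝ, f u (v + 2 * π) = f u v := by
    intro u v
    simp only [hfdef]
    rw [eper, eper, show (u - (v + 2 * π)) / 2 = ((u - v) / 2 - π) by ring,
      ← hgp ((u - v) / 2 - π), show (u - v) / 2 - π + π = (u - v) / 2 by ring]
  -- key sign flip
  have eshift : ∀ (j : ℕ) (x : ℝ), Complex.exp (Complex.I * j * ((x + c : ℝ) : ℂ)) =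
      Complex.exp (Complex.I * j * x) * Complex.exp (Complex.I * j * c) := by
    intro j x
    rw [← Complex.exp_add]
    congr 1
    push_cast
    ring
  have hphase : Complex.exp (Complex.I * m * c) *
      (starRingEnd ℂ) (Complex.exp (Complex.I * n * c)) = -1 := by
    rw [← Complex.exp_conj, ← Complex.exp_add]
    have h1 : Complex.I * m * c + (starRingEnd ℂ) (Complex.I * n * c) =
        (((m : ℝ) - n) * c : ℝ) * Complex.I := by
      simp only [map_mul, Complex.conj_I, Complex.conj_ofReal, Complex.conj_natCast]
      push_cast
      ring
    rw [h1, show ((m : ℝ) - n) * c = π by rw [hcdef]; field_simp, Complex.exp_pi_mul_I]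
  have key : ∀ u v : ℝ, f (u + c) (v + c) = - f u v := by
    intro u v
    simp only [hfdef]
    rw [eshift, eshift, eshift, eshift,
      show (u + c - (v + c)) / 2 = (u - v) / 2 by ring]
    set A := Complex.exp (Complex.I * m * u) - Complex.exp (Complex.I * m * v) with hA
    set B := Complex.exp (Complex.I * n * u) - Complex.exp (Complex.I * n * v) with hB
    have h2 : (Complex.exp (Complex.I * m * u) * Complex.exp (Complex.I * m * c) -
          Complex.exp (Complex.I * m * v) * Complex.exp (Complex.I * m * c)) *
        (starRingEnd ℂ) (Complex.exp (Complex.I * n * u) * Complex.exp (Complex.I * n * c) -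
          Complex.exp (Complex.I * n * v) * Complex.exp (Complex.I * n * c)) =
        - (A * (starRingEnd ℂ) B) := by
      have h3 : Complex.exp (Complex.I * n * u) * Complex.exp (Complex.I * n * c) -
          Complex.exp (Complex.I * n * v) * Complex.exp (Complex.I * n * c) =
          B * Complex.exp (Complex.I * n * c) := by rw [hB]; ring
      rw [h3, map_mul]
      calc (Complex.exp (Complex.I * m * u) * Complex.exp (Complex.I * m * c) -
            Complex.exp (Complex.I * m * v) * Complex.exp (Complex.I * m * c)) *
          ((starRingEnd ℂ) B * (starRingEnd ℂ) (Complex.exp (Complex.I * n * c)))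
          = (A * (starRingEnd ℂ) B) * (Complex.exp (Complex.I * m * c) *
              (starRingEnd ℂ) (Complex.exp (Complex.I * n * c))) := by rw [hA]; ring
        _ = (A * (starRingEnd ℂ) B) * (-1) := by rw [hphase]
        _ = - (A * (starRingEnd ℂ) B) := by ring
    rw [h2, Complex.neg_re]
    ring
  -- convert the double integral to iterated interval integrals
  have hle : (-π : ℝ) ≤ π := by linarith [pi_pos]
  have hIcc : ∀ h : ℝ → ℝ, ∫ y in Icc (-π) π, h y = ∫ y in (-π)..π, h y := by
    intro h
    rw [intervalIntegral.integral_of_le hle, integral_Icc_eq_integral_Ioc]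
  have hfub : (∫ p in Icc (-π) π ×ˢ Icc (-π) π, f p.1 p.2) =
      ∫ u in (-π)..π, ∫ v in (-π)..π, f u v := by
    rw [Measure.volume_eq_prod]
    rw [MeasureTheory.setIntegral_prod _ (by rw [← Measure.volume_eq_prod]; exact hint)]
    rw [hIcc]
    congr 1
    ext u
    rw [hIcc]
  -- shift lemma
  have shift : ∀ h : ℝ → ℝ, (∀ x, h (x + 2 * π) = h x) →
      (∫ x in (-π)..π, h (x + c)) = ∫ x in (-π)..π, h x := by
    intro h hp
    rw [intervalIntegral.integral_comp_add_right]
    have hper : Function.Periodic h (2 * π) := hp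
    have h4 := hper.intervalIntegral_add_eq (-π + c) (-π)
    rw [show -π + c + 2 * π = π + c by ring, show -π + 2 * π = π by ring] at h4
    exact h4
  set I : ℝ := ∫ u in (-π)..π, ∫ v in (-π)..π, f u v with hI
  have step1 : I = ∫ u in (-π)..π, ∫ v in (-π)..π, f u (v + c) := by
    rw [hI]
    congr 1
    ext u
    rw [shift (f u) (fun x => hfv u x)]
  have step2 : (∫ u in (-π)..π, ∫ v in (-π)..π, f u (v + c)) =
      ∫ u in (-π)..π, ∫ v in (-π)..π, f (u + c) (v + c) := by
    rw [← shift (fun u => ∫ v in (-π)..π, f u (v + c))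
      (fun x => by simp only [hfu])]
  have step3 : (∫ u in (-π)..π, ∫ v in (-π)..π, f (u + c) (v + c)) = -I := by
    rw [hI, ← intervalIntegral.integral_neg]
    congr 1
    ext u
    rw [← intervalIntegral.integral_neg]
    congr 1
    ext v
    exact key u v
  have hII : I = -I := step1.trans (step2.trans step3)
  have hI0 : I = 0 := by linarith
  exact hfub.trans hI0
end

section
/- For s ≥ 1/2 and n ≥ 1, define T_n^s := ∫_{−π}^{π}∫_{−π}^{π} |sin(n(u−v)/2)|² / |sin((u−v)/2)| · (log₂(π/|sin((u−v)/2)|))^{2s−1} du dv and R_n^s := ∫₀¹ |sin(πnt/2)|²/t · (log₂(2/t))^{2s−1} dt. Then 4π·R_n^s ≤ T_n^s ≤ 8π²·(log₂ π)^{2s−1}·R_n^s. -/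
/-!
The integrand of `T` is `K (u - v)` for a `2π`-periodic even kernel `K`, so Fubini and
periodicity give `T = 2π ∫_{-π}^{π} K = 4π ∫_0^π K = 4π² ∫_0^1 K (π t) dt`. On `(0, 1]`
Jordan's inequality `t ≤ sin (π t / 2) ≤ π t / 2` compares `K (π t)` pointwise with the
integrand of `R`: from below with the factor `2 / π`, from above with the factor
`(log₂ π)^(2s-1)`, the logarithm being handled by `log₂ (π / t) ≤ log₂ π · log₂ (2 / t)`.
-/

open Set MeasureTheory Real

namespace Function.Periodic

variable {E : Type*} [NormedAddCommGroup E] {f : ℝ → E} {a b : ℝ}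

theorem intervalIntegrable_of_integrableOn_Icc_prod_comp_sub (hab : a < b)
    (hf : Periodic f (b - a))
    (hint : IntegrableOn (fun p : ℝ × ℝ => f (p.1 - p.2)) (Icc a b ×ˢ Icc a b)) (c d : ℝ) :
    IntervalIntegrable f volume c d := by
  rw [IntegrableOn, Measure.volume_eq_prod, ← Measure.prod_restrict] at hint
  have : (ae (volume.restrict (Icc a b))).NeBot := by
    rw [ae_neBot, ne_eq, Measure.restrict_eq_zero, Real.volume_Icc, ENNReal.ofReal_eq_zero]
    linarith
  obtain ⟨v, -, hv⟩ := ((ae_restrict_mem measurableSet_Icc).and hint.prod_left_ae).exists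
  have hperiod : IntervalIntegrable f volume (a - v) (a - v + (b - a)) := by
    have := ((intervalIntegrable_iff_integrableOn_Icc_of_le hab.le).mpr hv).comp_add_right v
    simpa [show a - v + (b - a) = b - v by ring] using this
  exact hf.intervalIntegrable (by linarith) hperiod c d

variable [NormedSpace ℝ E]

theorem intervalIntegral_comp_sub_left_eq (hf : Periodic f (b - a)) (u : ℝ) :
    ∫ v in a..b, f (u - v) = ∫ x in a..b, f x := by
  rw [intervalIntegral.integral_comp_sub_left, show u - a = u - b + (b - a) by ring,
    hf.intervalIntegral_add_eq (u - b) a, add_sub_cancel]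

theorem setIntegral_Icc_prod_comp_sub [CompleteSpace E] (hab : a ≤ b) (hf : Periodic f (b - a))
    (hint : IntegrableOn (fun p : ℝ × ℝ => f (p.1 - p.2)) (Icc a b ×ˢ Icc a b)) :
    ∫ p in Icc a b ×ˢ Icc a b, f (p.1 - p.2) = (b - a) • ∫ x in a..b, f x := by
  rw [Measure.volume_eq_prod] at hint ⊢
  have hinner (u : ℝ) : ∫ v in Icc a b, f (u - v) = ∫ x in a..b, f x := by
    rw [integral_Icc_eq_integral_Ioc, ← intervalIntegral.integral_of_le hab,
      hf.intervalIntegral_comp_sub_left_eq]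
  simp only [setIntegral_prod _ hint, hinner]
  rw [setIntegral_const, Real.volume_real_Icc_of_le hab]

end Function.Periodic

theorem intervalIntegral.integral_eq_two_smul_of_even {E : Type*} [NormedAddCommGroup E]
    [NormedSpace ℝ E] {f : ℝ → E} (hf : ∀ x, f (-x) = f x) {c : ℝ}
    (hint : IntervalIntegrable f volume 0 c) :
    ∫ x in -c..c, f x = (2 : ℝ) • ∫ x in 0..c, f x := by
  have hneg : IntervalIntegrable f volume (-c) 0 := by
    simpa [hf] using ((IntervalIntegrable.iff_comp_neg).mp hint).symm
  have hreflect : ∫ x in -c..0, f x = ∫ x in 0..c, f x := by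
    simpa [hf] using (intervalIntegral.integral_comp_neg (a := 0) (b := c) f).symm
  rw [← intervalIntegral.integral_add_adjacent_intervals hneg hint, hreflect, two_smul]

namespace Real

theorem logb_div_le_logb_mul_logb_div {b x t : ℝ} (hb : 1 < b) (hx : b ≤ x) (ht : 0 < t)
    (ht1 : t ≤ 1) : logb b (x / t) ≤ logb b x * logb b (b / t) := by
  have hx1 : 1 ≤ logb b x := by
    simpa [logb_self_eq_one hb] using logb_le_logb_of_le hb (by linarith) hx
  have ht0 : logb b t ≤ 0 := logb_nonpos hb ht.le ht1
  rw [logb_div (by linarith) ht.ne', logb_div (by linarith) ht.ne', logb_self_eq_one hb]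
  nlinarith

theorem logb_two_div_nonneg {t : ℝ} (ht0 : 0 < t) (ht1 : t ≤ 1) : 0 ≤ logb 2 (2 / t) :=
  logb_nonneg one_lt_two (by rw [le_div_iff₀ ht0]; linarith)

theorem logb_two_pi_nonneg : 0 ≤ logb 2 π :=
  logb_nonneg one_lt_two (by linarith [two_le_pi])

theorem le_sin_pi_mul_div_two {t : ℝ} (ht0 : 0 ≤ t) (ht1 : t ≤ 1) : t ≤ sin (π * t / 2) := by
  have := mul_le_sin (x := π * t / 2) (by positivity) (by nlinarith [pi_pos])
  rwa [show 2 / π * (π * t / 2) = t by field_simp] at this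

end Real

section Kernels

variable (n : ℕ) (s : ℝ)

noncomputable def circleKernel (x : ℝ) : ℝ :=
  |sin (n * x / 2)| ^ 2 / |sin (x / 2)| * logb 2 (π / |sin (x / 2)|) ^ (2 * s - 1)

noncomputable def modelKernel (t : ℝ) : ℝ :=
  |sin (π * n * t / 2)| ^ 2 / t * logb 2 (2 / t) ^ (2 * s - 1)

theorem circleKernel_neg (x : ℝ) : circleKernel n s (-x) = circleKernel n s x := by
  simp only [circleKernel, mul_neg, neg_div, sin_neg, abs_neg]

theorem circleKernel_periodic : Function.Periodic (circleKernel n s) (2 * π) := by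
  intro x
  simp only [circleKernel, show (n : ℝ) * (x + 2 * π) / 2 = n * x / 2 + n * π by ring,
    show (x + 2 * π) / 2 = x / 2 + π by ring, sin_add_pi, sin_add_nat_mul_pi, abs_neg, abs_mul,
    abs_pow, abs_one, one_pow, one_mul]

theorem circleKernel_pi_mul {t : ℝ} (ht0 : 0 < t) (ht1 : t ≤ 1) :
    circleKernel n s (π * t) = |sin (π * n * t / 2)| ^ 2 / sin (π * t / 2) *
      logb 2 (π / sin (π * t / 2)) ^ (2 * s - 1) := by
  have hsin : 0 < sin (π * t / 2) := ht0.trans_le (le_sin_pi_mul_div_two ht0.le ht1)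
  simp only [circleKernel, show (n : ℝ) * (π * t) / 2 = π * n * t / 2 by ring, abs_of_pos hsin]

theorem modelKernel_nonneg {t : ℝ} (ht0 : 0 < t) (ht1 : t ≤ 1) : 0 ≤ modelKernel n s t := by
  have := logb_two_div_nonneg ht0 ht1
  unfold modelKernel
  positivity

variable {s}

theorem modelKernel_le_circleKernel (hs : 1 / 2 ≤ s) {t : ℝ} (ht0 : 0 < t) (ht1 : t ≤ 1) :
    2 / π * modelKernel n s t ≤ circleKernel n s (π * t) := by
  have hlow := le_sin_pi_mul_div_two ht0.le ht1
  have hup := sin_le (x := π * t / 2) (by positivity)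
  have hsin : 0 < sin (π * t / 2) := ht0.trans_le hlow
  have hlog0 := logb_two_div_nonneg ht0 ht1
  have hlog : logb 2 (2 / t) ≤ logb 2 (π / sin (π * t / 2)) := by
    refine logb_le_logb_of_le one_lt_two (by positivity) ?_
    rw [div_le_div_iff₀ ht0 hsin]
    linarith
  have hdiv : 2 / π * (|sin (π * n * t / 2)| ^ 2 / t) ≤
      |sin (π * n * t / 2)| ^ 2 / sin (π * t / 2) :=
    calc 2 / π * (|sin (π * n * t / 2)| ^ 2 / t)
        = |sin (π * n * t / 2)| ^ 2 / (π * t / 2) := by field_simp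
      _ ≤ _ := div_le_div_of_nonneg_left (by positivity) hsin hup
  rw [circleKernel_pi_mul n s ht0 ht1, modelKernel, ← mul_assoc]
  exact mul_le_mul hdiv (rpow_le_rpow hlog0 hlog (by linarith)) (by positivity) (by positivity)

theorem circleKernel_le_modelKernel (hs : 1 / 2 ≤ s) {t : ℝ} (ht0 : 0 < t) (ht1 : t ≤ 1) :
    circleKernel n s (π * t) ≤ logb 2 π ^ (2 * s - 1) * modelKernel n s t := by
  have hlow := le_sin_pi_mul_div_two ht0.le ht1
  have hsin : 0 < sin (π * t / 2) := ht0.trans_le hlow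
  have hlog0 : 0 ≤ logb 2 (π / sin (π * t / 2)) := logb_nonneg one_lt_two <|
    (one_le_div hsin).mpr <| (sin_le_one _).trans (by linarith [two_le_pi])
  have hlog : logb 2 (π / sin (π * t / 2)) ≤ logb 2 π * logb 2 (2 / t) :=
    (logb_le_logb_of_le one_lt_two (by positivity)
      (div_le_div_of_nonneg_left pi_pos.le ht0 hlow)).trans
      (logb_div_le_logb_mul_logb_div one_lt_two two_le_pi ht0 ht1)
  have hpow := rpow_le_rpow hlog0 hlog (by linarith : (0 : ℝ) ≤ 2 * s - 1)
  rw [mul_rpow logb_two_pi_nonneg (logb_two_div_nonneg ht0 ht1)] at hpow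
  rw [circleKernel_pi_mul n s ht0 ht1, modelKernel, mul_left_comm]
  exact mul_le_mul (div_le_div_of_nonneg_left (by positivity) ht0 hlow) hpow
    (by positivity) (by positivity)

theorem intervalIntegrable_circleKernel
    (hint : IntegrableOn (fun p : ℝ × ℝ => circleKernel n s (p.1 - p.2))
      (Icc (-π) π ×ˢ Icc (-π) π)) (c d : ℝ) :
    IntervalIntegrable (circleKernel n s) volume c d := by
  refine Function.Periodic.intervalIntegrable_of_integrableOn_Icc_prod_comp_sub
    (by linarith [pi_pos]) ?_ hint c d
  simpa only [sub_neg_eq_add, ← two_mul] using circleKernel_periodic n s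

theorem integrableOn_circleKernel_pi_mul
    (hint : IntegrableOn (fun p : ℝ × ℝ => circleKernel n s (p.1 - p.2))
      (Icc (-π) π ×ˢ Icc (-π) π)) :
    IntegrableOn (fun t => circleKernel n s (π * t)) (Ioo 0 1) := by
  have := (intervalIntegrable_circleKernel n hint 0 π).comp_mul_left (c := π)
  rw [zero_div, div_self pi_ne_zero] at this
  exact (intervalIntegrable_iff_integrableOn_Ioo_of_le zero_le_one).mp this

theorem setIntegral_circleKernel_comp_sub
    (hint : IntegrableOn (fun p : ℝ × ℝ => circleKernel n s (p.1 - p.2))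
      (Icc (-π) π ×ˢ Icc (-π) π)) :
    ∫ p in Icc (-π) π ×ˢ Icc (-π) π, circleKernel n s (p.1 - p.2) =
      4 * π ^ 2 * ∫ t in Ioo 0 1, circleKernel n s (π * t) := by
  have hper : Function.Periodic (circleKernel n s) (π - -π) := by
    simpa only [sub_neg_eq_add, ← two_mul] using circleKernel_periodic n s
  rw [hper.setIntegral_Icc_prod_comp_sub (by linarith [pi_pos]) hint,
    intervalIntegral.integral_eq_two_smul_of_even (circleKernel_neg n s)
      (intervalIntegrable_circleKernel n hint 0 π),
    ← integral_Ioc_eq_integral_Ioo, ← intervalIntegral.integral_of_le zero_le_one,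
    intervalIntegral.integral_comp_mul_left _ pi_ne_zero, mul_zero, mul_one]
  simp only [smul_eq_mul]
  field_simp
  ring

end Kernels

theorem stmt14_general (s : ℝ) (hs : 1 / 2 ≤ s) (n : ℕ) (T R : ℝ)
    (hT : T = ∫ p in Icc (-π) π ×ˢ Icc (-π) π,
      |Real.sin (n * (p.1 - p.2) / 2)| ^ 2 / |Real.sin ((p.1 - p.2) / 2)| *
        Real.logb 2 (π / |Real.sin ((p.1 - p.2) / 2)|) ^ (2 * s - 1))
    (hR : R = ∫ t in Ioo (0 : ℝ) 1,
      |Real.sin (π * n * t / 2)| ^ 2 / t * Real.logb 2 (2 / t) ^ (2 * s - 1))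
    (hTint : IntegrableOn
      (fun p : ℝ × ℝ =>
        |Real.sin (n * (p.1 - p.2) / 2)| ^ 2 / |Real.sin ((p.1 - p.2) / 2)| *
          Real.logb 2 (π / |Real.sin ((p.1 - p.2) / 2)|) ^ (2 * s - 1))
      (Icc (-π) π ×ˢ Icc (-π) π))
    (hRint : IntegrableOn
      (fun t : ℝ =>
        |Real.sin (π * n * t / 2)| ^ 2 / t * Real.logb 2 (2 / t) ^ (2 * s - 1))
      (Ioo 0 1)) :
    4 * π * R ≤ T ∧ T ≤ 8 * π ^ 2 * Real.logb 2 π ^ (2 * s - 1) * R := by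
  change IntegrableOn (modelKernel n s) (Ioo 0 1) at hRint
  change R = ∫ t in Ioo 0 1, modelKernel n s t at hR
  change T = ∫ p in Icc (-π) π ×ˢ Icc (-π) π, circleKernel n s (p.1 - p.2) at hT
  change IntegrableOn (fun p : ℝ × ℝ => circleKernel n s (p.1 - p.2))
    (Icc (-π) π ×ˢ Icc (-π) π) at hTint
  rw [setIntegral_circleKernel_comp_sub n hTint] at hT
  have hJint := integrableOn_circleKernel_pi_mul n hTint
  have hR0 : 0 ≤ R := hR ▸ setIntegral_nonneg measurableSet_Ioo
    fun t ht => modelKernel_nonneg n s ht.1 ht.2.le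
  have hlow : 2 / π * R ≤ ∫ t in Ioo 0 1, circleKernel n s (π * t) := by
    rw [hR, ← integral_const_mul]
    exact setIntegral_mono_on (hRint.const_mul _) hJint measurableSet_Ioo
      fun t ht => modelKernel_le_circleKernel n hs ht.1 ht.2.le
  have hup : ∫ t in Ioo 0 1, circleKernel n s (π * t) ≤ logb 2 π ^ (2 * s - 1) * R := by
    rw [hR, ← integral_const_mul]
    exact setIntegral_mono_on hJint (hRint.const_mul _) measurableSet_Ioo
      fun t ht => circleKernel_le_modelKernel n hs ht.1 ht.2.le
  have hC0 : 0 ≤ logb 2 π ^ (2 * s - 1) := rpow_nonneg logb_two_pi_nonneg _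
  have hπ := pi_pos
  constructor
  · calc 4 * π * R ≤ 4 * π ^ 2 * (2 / π * R) := by
          rw [← mul_assoc, show 4 * π ^ 2 * (2 / π) = 8 * π by field_simp; ring]; nlinarith
      _ ≤ T := hT ▸ mul_le_mul_of_nonneg_left hlow (by positivity)
  · calc T ≤ 4 * π ^ 2 * (logb 2 π ^ (2 * s - 1) * R) :=
          hT ▸ mul_le_mul_of_nonneg_left hup (by positivity)
      _ ≤ 8 * π ^ 2 * logb 2 π ^ (2 * s - 1) * R := by nlinarith [mul_nonneg hC0 hR0]

/-- For `s ≥ 1/2` and `n ≥ 1`, with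
`T = ∫∫_{[−π,π]²} |sin(n(u−v)/2)|²/|sin((u−v)/2)| (log₂(π/|sin((u−v)/2)|))^{2s−1} du dv`
and `R = ∫₀¹ |sin(πnt/2)|²/t (log₂(2/t))^{2s−1} dt` (both finite),
`4π R ≤ T ≤ 8π² (log₂ π)^{2s−1} R`. -/
theorem stmt14 (s : ℝ) (hs : 1 / 2 ≤ s) (n : ℕ) (hn : 1 ≤ n) (T R : ℝ)
    (hT : T = ∫ p in Icc (-π) π ×ˢ Icc (-π) π,
      |Real.sin (n * (p.1 - p.2) / 2)| ^ 2 / |Real.sin ((p.1 - p.2) / 2)| *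
        Real.logb 2 (π / |Real.sin ((p.1 - p.2) / 2)|) ^ (2 * s - 1))
    (hR : R = ∫ t in Ioo (0 : ℝ) 1,
      |Real.sin (π * n * t / 2)| ^ 2 / t * Real.logb 2 (2 / t) ^ (2 * s - 1))
    (hTint : IntegrableOn
      (fun p : ℝ × ℝ =>
        |Real.sin (n * (p.1 - p.2) / 2)| ^ 2 / |Real.sin ((p.1 - p.2) / 2)| *
          Real.logb 2 (π / |Real.sin ((p.1 - p.2) / 2)|) ^ (2 * s - 1))
      (Icc (-π) π ×ˢ Icc (-π) π))
    (hRint : IntegrableOn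
      (fun t : ℝ =>
        |Real.sin (π * n * t / 2)| ^ 2 / t * Real.logb 2 (2 / t) ^ (2 * s - 1))
      (Ioo 0 1)) :
    4 * π * R ≤ T ∧ T ≤ 8 * π ^ 2 * Real.logb 2 π ^ (2 * s - 1) * R :=
  stmt14_general s hs n T R hT hR hTint hRint
end

section
/- Let γ : [0,n] → V be continuous and linear on each integer interval [k, k+1] (V a Banach space), and p ∈ [1,∞). Then for any finite partition 0 = t_0 < t_1 < ⋯ < t_K = n of [0,n] by real numbers, there exists a partition by integers 0 = n_0 < n_1 < ⋯ < n_J = n such that Σ_{k=1}^K ‖γ(t_k) − γ(t_{k−1})‖^p ≤ Σ_{j=1}^J ‖γ(n_j) − γ(n_{j−1})‖^p. Consequently, the p-variation of γ on [0,n] is attained by taking the supremum only over integer partitions. -/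
open Set ENNReal

/-!
On each `[k, k + 1]` the curve `γ` is affine, so for fixed neighbours `x ≤ s ≤ y` the sum
`‖γ s - γ x‖ ^ p + ‖γ y - γ s‖ ^ p` is a convex function of `s ∈ [k, k + 1]`; it is therefore
maximised at an end of `[⌊s⌋, min (⌊s⌋ + 1) y]`. Sweeping the partition from the left (where the
previous point is already an integer `≤ ⌊s⌋`), each point is either moved to an integer or merged
with its right neighbour, and the partition sum never decreases.
-/

section

variable {V : Type*} [NormedAddCommGroup V]

noncomputable def pVarSum (γ : ℝ → V) (p : ℝ) (t : ℕ → ℝ) (K : ℕ) : ℝ :=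
  ∑ k ∈ Finset.range K, ‖γ (t (k + 1)) - γ (t k)‖ ^ p

lemma pVarSum_succ (γ : ℝ → V) (p : ℝ) (t : ℕ → ℝ) (K : ℕ) :
    pVarSum γ p t (K + 1) = ‖γ (t 1) - γ (t 0)‖ ^ p + pVarSum γ p (fun i => t (i + 1)) K := by
  simp only [pVarSum, Finset.sum_range_succ', add_comm]

def DominatedByNatPartition (γ : ℝ → V) (p : ℝ) (j n : ℕ) (S : ℝ) : Prop :=
  ∃ (J : ℕ) (m : ℕ → ℕ), m 0 = j ∧ m J = n ∧ (∀ i < J, m i < m (i + 1)) ∧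
    S ≤ ∑ i ∈ Finset.range J, ‖γ (m (i + 1) : ℕ) - γ (m i : ℕ)‖ ^ p

namespace DominatedByNatPartition

variable {γ : ℝ → V} {p : ℝ} {j j' n : ℕ} {S S' : ℝ}

lemma refl (γ : ℝ → V) (p : ℝ) (n : ℕ) : DominatedByNatPartition γ p n n 0 :=
  ⟨0, fun _ => n, rfl, rfl, by simp, by simp⟩

lemma mono (h : DominatedByNatPartition γ p j n S') (hS : S ≤ S') :
    DominatedByNatPartition γ p j n S :=
  let ⟨J, m, hm0, hmJ, hm, hle⟩ := h
  ⟨J, m, hm0, hmJ, hm, hS.trans hle⟩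

lemma cons (hp : p ≠ 0) (hjj' : j ≤ j') (h : DominatedByNatPartition γ p j' n S) :
    DominatedByNatPartition γ p j n (‖γ j' - γ j‖ ^ p + S) := by
  obtain rfl | hlt := hjj'.eq_or_lt
  · simpa [Real.zero_rpow hp] using h
  obtain ⟨J, m, rfl, hmJ, hm, hle⟩ := h
  refine ⟨J + 1, fun | 0 => j | i + 1 => m i, rfl, hmJ, fun i hi => ?_, ?_⟩
  · cases i with
    | zero => exact hlt
    | succ i => exact hm i (by omega)
  · rw [Finset.sum_range_succ', add_comm]
    exact add_le_add_left hle _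

end DominatedByNatPartition

variable [NormedSpace ℝ V]

lemma convexOn_norm_rpow {p : ℝ} (hp : 1 ≤ p) : ConvexOn ℝ univ (fun v : V => ‖v‖ ^ p) := by
  refine ⟨convex_univ, fun x _ y _ a b ha hb hab => ?_⟩
  calc ‖a • x + b • y‖ ^ p ≤ (a • ‖x‖ + b • ‖y‖) ^ p := by
        gcongr
        simpa [norm_smul, abs_of_nonneg ha, abs_of_nonneg hb] using norm_add_le (a • x) (b • y)
    _ ≤ a • ‖x‖ ^ p + b • ‖y‖ ^ p :=
        (convexOn_rpow hp).2 (norm_nonneg x) (norm_nonneg y) ha hb hab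

def AffineOnUnitIntervals (γ : ℝ → V) : Prop :=
  ∀ k : ℕ, ∀ s ∈ Icc (k : ℝ) (k + 1), γ s = γ k + (s - k) • (γ (k + 1) - γ k)

lemma AffineOnUnitIntervals.convexOn_comp {γ : ℝ → V} (hγ : AffineOnUnitIntervals γ) {F : V → ℝ}
    (hF : ConvexOn ℝ univ F) (k : ℕ) : ConvexOn ℝ (Icc (k : ℝ) (k + 1)) (F ∘ γ) := by
  let L : ℝ →ᵃ[ℝ] V :=
    (AffineMap.lineMap (γ k) (γ (k + 1))).comp (AffineMap.id ℝ ℝ - AffineMap.const ℝ ℝ (k : ℝ))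
  refine ((hF.comp_affineMap L).subset (subset_univ _) (convex_Icc _ _)).congr fun s hs => ?_
  simp [L, hγ k s hs, AffineMap.lineMap_apply_module', add_comm]

lemma convexOn_norm_sub_rpow_add_norm_rpow_sub {p : ℝ} (hp : 1 ≤ p) (x y : V) :
    ConvexOn ℝ univ (fun v : V => ‖v - x‖ ^ p + ‖y - v‖ ^ p) := by
  refine (((convexOn_norm_rpow hp).translate_right (-x)).add
    ((convexOn_norm_rpow hp).translate_right (-y))).congr fun v _ => ?_
  simp [neg_add_eq_sub, norm_sub_rev y v]

lemma AffineOnUnitIntervals.exists_nat_two_increments_ge {γ : ℝ → V}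
    (hγ : AffineOnUnitIntervals γ) {p : ℝ} (hp : 1 ≤ p) (j : ℕ) {s y : ℝ} (hjs : j ≤ s)
    (hsy : s ≤ y) :
    ∃ a : ℕ, j ≤ a ∧ (a : ℝ) ≤ y ∧
      ‖γ s - γ j‖ ^ p + ‖γ y - γ s‖ ^ p ≤ ‖γ a - γ j‖ ^ p + ‖γ y - γ a‖ ^ p := by
  set f : ℝ → ℝ := fun r => ‖γ r - γ j‖ ^ p + ‖γ y - γ r‖ ^ p
  set k := ⌊s⌋₊
  have hks : (k : ℝ) ≤ s := Nat.floor_le ((Nat.cast_nonneg j).trans hjs)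
  have hsk : s ≤ k + 1 := (Nat.lt_floor_add_one s).le
  have hjk : j ≤ k := Nat.le_floor hjs
  set b := min ((k : ℝ) + 1) y
  have hfs : f s ≤ max (f k) (f b) :=
    (hγ.convexOn_comp (convexOn_norm_sub_rpow_add_norm_rpow_sub hp _ _) k).le_on_segment
      ⟨le_rfl, by linarith⟩ ⟨hks.trans (le_min hsk hsy), min_le_left _ _⟩
      (by rw [segment_eq_Icc (hks.trans (le_min hsk hsy))]; exact ⟨hks, le_min hsk hsy⟩)
  rcases max_choice (f k) (f b) with hmax | hmax <;> rw [hmax] at hfs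
  · exact ⟨k, hjk, hks.trans hsy, hfs⟩
  obtain hb | hb : b = k + 1 ∨ b = y := min_choice _ _ <;> rw [hb] at hfs
  · exact ⟨k + 1, by omega, by push_cast; exact hb ▸ min_le_right _ _, by exact_mod_cast hfs⟩
  -- moving `s` onto `y` or onto `j` gives the same two increments, `0` and `‖γ y - γ j‖ ^ p`
  · refine ⟨j, le_rfl, hjs.trans hsy, hfs.trans_eq ?_⟩
    simp [f, Real.zero_rpow (by linarith : p ≠ 0), add_comm]

lemma AffineOnUnitIntervals.dominatedByNatPartition_pVarSum {γ : ℝ → V}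
    (hγ : AffineOnUnitIntervals γ) {p : ℝ} (hp : 1 ≤ p) {n : ℕ} (K : ℕ) :
    ∀ (j : ℕ) (t : ℕ → ℝ), t 0 = j → t K = n → (∀ i < K, t i ≤ t (i + 1)) →
      DominatedByNatPartition γ p j n (pVarSum γ p t K) := by
  have hp0 : p ≠ 0 := by linarith
  induction K with
  | zero =>
    intro j t h0 hK _
    obtain rfl : j = n := by exact_mod_cast h0.symm.trans hK
    simpa [pVarSum] using DominatedByNatPartition.refl γ p j
  | succ K ih =>
    intro j t h0 hK hmono
    rw [pVarSum_succ, h0]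
    cases K with
    | zero =>
      have hjn : j ≤ n := by exact_mod_cast h0 ▸ hK ▸ hmono 0 one_pos
      rw [hK]
      exact (ih n (fun i => t (i + 1)) hK hK (by simp)).cons hp0 hjn
    | succ K =>
      obtain ⟨a, hja, hat, hpair⟩ :=
        hγ.exists_nat_two_increments_ge hp j (h0 ▸ hmono 0 (by omega)) (hmono 1 (by omega))
      have hdom := ih a (Function.update (fun i => t (i + 1)) 0 a) (by simp) (by simpa using hK)
        fun i hi => by
          cases i with
          | zero => simpa using hat
          | succ i => simpa using hmono (i + 2) (by omega)
      rw [pVarSum_succ] at hdom ⊢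
      refine (hdom.cons hp0 hja).mono ?_
      simp only [Function.update_self, ne_eq, one_ne_zero, not_false_eq_true,
        Function.update_of_ne, Nat.add_one_ne_zero]
      linarith

end

theorem stmt19_general {V : Type*} [NormedAddCommGroup V] [NormedSpace ℝ V]
    (n : ℕ) (γ : ℝ → V)
    (hlin : ∀ k : ℕ, ∀ s ∈ Icc (k : ℝ) (k + 1),
      γ s = γ k + (s - k) • (γ (k + 1) - γ k))
    (p : ℝ) (hp : 1 ≤ p) :
    (∀ (K : ℕ) (t : ℕ → ℝ), t 0 = 0 → t K = n → (∀ i < K, t i < t (i + 1)) →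
      ∃ (J : ℕ) (m : ℕ → ℕ), m 0 = 0 ∧ m J = n ∧ (∀ j < J, m j < m (j + 1)) ∧
        ∑ k ∈ Finset.range K, ‖γ (t (k + 1)) - γ (t k)‖ ^ p ≤
          ∑ j ∈ Finset.range J, ‖γ (m (j + 1) : ℕ) - γ (m j : ℕ)‖ ^ p) ∧
    (⨆ (K : ℕ) (t : ℕ → ℝ)
        (_ : t 0 = 0 ∧ t K = (n : ℝ) ∧ ∀ i < K, t i ≤ t (i + 1)),
        ENNReal.ofReal (∑ k ∈ Finset.range K, ‖γ (t (k + 1)) - γ (t k)‖ ^ p)) =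
      (⨆ (J : ℕ) (m : ℕ → ℕ)
        (_ : m 0 = 0 ∧ m J = n ∧ ∀ j < J, m j ≤ m (j + 1)),
        ENNReal.ofReal (∑ j ∈ Finset.range J, ‖γ (m (j + 1) : ℕ) - γ (m j : ℕ)‖ ^ p)) := by
  have hdom (K : ℕ) (t : ℕ → ℝ) (h0 : t 0 = 0) (hK : t K = n)
      (hmono : ∀ i < K, t i ≤ t (i + 1)) : DominatedByNatPartition γ p 0 n (pVarSum γ p t K) :=
    AffineOnUnitIntervals.dominatedByNatPartition_pVarSum hlin hp K 0 t (by simpa using h0) hK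
      hmono
  refine ⟨fun K t h0 hK ht => hdom K t h0 hK fun i hi => (ht i hi).le, le_antisymm ?_ ?_⟩
  · refine iSup₂_le fun K t => iSup_le fun ⟨h0, hK, hmono⟩ => ?_
    obtain ⟨J, m, hm0, hmJ, hm, hle⟩ := hdom K t h0 hK hmono
    exact le_iSup₂_of_le J m <| le_iSup_of_le ⟨hm0, hmJ, fun i hi => (hm i hi).le⟩ <|
      ofReal_le_ofReal hle
  · refine iSup₂_le fun J m => iSup_le fun ⟨hm0, hmJ, hm⟩ => ?_
    exact le_iSup₂_of_le J (fun i => (m i : ℝ)) <| le_iSup_of_le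
      ⟨by simp [hm0], by simp [hmJ], fun i hi => Nat.cast_le.mpr (hm i hi)⟩ le_rfl

/-- Let `γ : [0,n] → V` be the piecewise-linear interpolation of its values
at the integers `0, 1, …, n` and let `p ∈ [1,∞)`.  Then every finite partition
`0 = t 0 < t 1 < ⋯ < t K = n` of `[0,n]` is dominated by an integer partition
`0 = m 0 < m 1 < ⋯ < m J = n`:
`∑ ‖γ(t (k+1)) − γ(t k)‖^p ≤ ∑ ‖γ(m (j+1)) − γ(m j)‖^p`.
Consequently the `p`-variation of `γ` on `[0,n]` (the supremum of the partition sums) is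
attained as the supremum over integer partitions only. -/
theorem stmt19 {V : Type*} [NormedAddCommGroup V] [NormedSpace ℝ V]
    (n : ℕ) (hn : 1 ≤ n) (γ : ℝ → V)
    (hlin : ∀ k : ℕ, ∀ s ∈ Icc (k : ℝ) (k + 1),
      γ s = γ k + (s - k) • (γ (k + 1) - γ k))
    (p : ℝ) (hp : 1 ≤ p) :
    (∀ (K : ℕ) (t : ℕ → ℝ), t 0 = 0 → t K = n → (∀ i < K, t i < t (i + 1)) →
      ∃ (J : ℕ) (m : ℕ → ℕ), m 0 = 0 ∧ m J = n ∧ (∀ j < J, m j < m (j + 1)) ∧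
        ∑ k ∈ Finset.range K, ‖γ (t (k + 1)) - γ (t k)‖ ^ p ≤
          ∑ j ∈ Finset.range J, ‖γ (m (j + 1) : ℕ) - γ (m j : ℕ)‖ ^ p) ∧
    (⨆ (K : ℕ) (t : ℕ → ℝ)
        (_ : t 0 = 0 ∧ t K = (n : ℝ) ∧ ∀ i < K, t i ≤ t (i + 1)),
        ENNReal.ofReal (∑ k ∈ Finset.range K, ‖γ (t (k + 1)) - γ (t k)‖ ^ p)) =
      (⨆ (J : ℕ) (m : ℕ → ℕ)
        (_ : m 0 = 0 ∧ m J = n ∧ ∀ j < J, m j ≤ m (j + 1)),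
        ENNReal.ofReal (∑ j ∈ Finset.range J, ‖γ (m (j + 1) : ℕ) - γ (m j : ℕ)‖ ^ p)) :=
  stmt19_general n γ hlin p hp
end
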